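/- arXiv:2208.02426 — 7 statements merged into one kernel-verified Lean document; each statement's English description precedes it below -/
import Mathlib

section
/- Let n ≥ 1, let C ⊆ ℝⁿ be a configuration such that for every P ∈ C and every d > 0 the set {x ∈ C : dist(x,P) = d} is finite, and let P ∈ C. Suppose there exists an isometry g of ℝⁿ (a distance-preserving bijection of ℝⁿ) with g(C) = C whose only fixed point in ℝⁿ is P. Then for every d > 0, the sum over all x ∈ C with dist(x,P) = d of the vectors (x − P) equals the zero vector. In particular, every group-balanced configuration with finite distance classes is balanced. -/
/-!
By Mazur–Ulam, `g` is affine; let `L` be its linear part, so that `g x - P = L (x - P)`. A vector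
`v` fixed by `L` gives the fixed point `P + v` of `g`, so `L` fixes only `0`. Since `g` permutes
the points of `C` at distance `d` from `P`, the sum of the vectors `x - P` over them is fixed by `L`,
hence zero.
-/

open Set Metric

theorem AddEquiv.map_finsum_mem' {α M N : Type*} [AddCommMonoid M] [AddCommMonoid N]
    (e : M ≃+ N) (f : α → M) (s : Set α) : e (∑ᶠ x ∈ s, f x) = ∑ᶠ x ∈ s, e (f x) := by
  simp only [e.map_finsum]

namespace IsometryEquiv

theorem bijOn_inter_sphere {X : Type*} [PseudoMetricSpace X] {g : X ≃ᵢ X} {C : Set X}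
    (hgC : g '' C = C) {P : X} (hgP : g P = P) (d : ℝ) :
    BijOn g (C ∩ sphere P d) (C ∩ sphere P d) := by
  convert g.injective.injOn.bijOn_image using 1
  rw [image_inter g.injective, hgC, image_sphere, hgP]

section NormedSpace

variable {E : Type*} [NormedAddCommGroup E] [NormedSpace ℝ E]

theorem apply_sub_apply_eq_linearIsometryEquiv (g : E ≃ᵢ E) (x y : E) :
    g x - g y = g.toRealAffineIsometryEquiv.linearIsometryEquiv (x - y) :=
  (g.toRealAffineIsometryEquiv.map_vsub x y).symm

theorem eq_zero_of_linearIsometryEquiv_apply_eq {g : E ≃ᵢ E} {P : E}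
    (hfix : ∀ x, g x = x ↔ x = P) {v : E}
    (hv : g.toRealAffineIsometryEquiv.linearIsometryEquiv v = v) : v = 0 := by
  have hgP : g P = P := (hfix P).mpr rfl
  have hgv : g (v + P) - g P = v := by
    rw [apply_sub_apply_eq_linearIsometryEquiv, add_sub_cancel_right, hv]
  rw [hgP, sub_eq_iff_eq_add] at hgv
  simpa using (hfix (v + P)).mp hgv

theorem finsum_mem_sub_eq_zero_of_bijOn {g : E ≃ᵢ E} {P : E}
    (hfix : ∀ x, g x = x ↔ x = P) {S : Set E} (hS : BijOn g S S) :
    ∑ᶠ x ∈ S, (x - P) = 0 := by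
  set L := g.toRealAffineIsometryEquiv.linearIsometryEquiv
  have hgP : g P = P := (hfix P).mpr rfl
  refine eq_zero_of_linearIsometryEquiv_apply_eq hfix ?_
  calc L (∑ᶠ x ∈ S, (x - P)) = ∑ᶠ x ∈ S, L (x - P) :=
        L.toLinearEquiv.toAddEquiv.map_finsum_mem' _ _
    _ = ∑ᶠ x ∈ S, (g x - P) := by
        simp only [L, ← apply_sub_apply_eq_linearIsometryEquiv, hgP]
    _ = ∑ᶠ x ∈ S, (x - P) := finsum_mem_eq_of_bijOn g hS fun _ _ => rfl

end NormedSpace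

end IsometryEquiv

theorem balanced_of_group_balanced_general (n : ℕ)
    (C : Set (EuclideanSpace ℝ (Fin n)))
    (P : EuclideanSpace ℝ (Fin n))
    (g : EuclideanSpace ℝ (Fin n) ≃ᵢ EuclideanSpace ℝ (Fin n))
    (hgC : g '' C = C)
    (hfix : ∀ x : EuclideanSpace ℝ (Fin n), g x = x ↔ x = P) :
    ∀ d : ℝ, 0 < d → ∑ᶠ x ∈ {x ∈ C | dist x P = d}, (x - P) = 0 := fun d _ =>
  IsometryEquiv.finsum_mem_sub_eq_zero_of_bijOn hfix <|
    IsometryEquiv.bijOn_inter_sphere hgC ((hfix P).mpr rfl) d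

/-- If `C ⊆ ℝⁿ` has finite distance classes and `g` is an isometry of `ℝⁿ` preserving `C`
whose only fixed point is `P ∈ C`, then for every `d > 0` the vectors from `P` to the points
of `C` at distance `d` from `P` sum to zero.  In particular every group-balanced configuration
with finite distance classes is balanced. -/
theorem balanced_of_group_balanced (n : ℕ) (hn : 1 ≤ n)
    (C : Set (EuclideanSpace ℝ (Fin n)))
    (hfin : ∀ P ∈ C, ∀ d : ℝ, 0 < d → {x ∈ C | dist x P = d}.Finite)
    (P : EuclideanSpace ℝ (Fin n)) (hP : P ∈ C)
    (g : EuclideanSpace ℝ (Fin n) ≃ᵢ EuclideanSpace ℝ (Fin n))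
    (hgC : g '' C = C)
    (hfix : ∀ x : EuclideanSpace ℝ (Fin n), g x = x ↔ x = P) :
    ∀ d : ℝ, 0 < d → ∑ᶠ x ∈ {x ∈ C | dist x P = d}, (x - P) = 0 :=
  balanced_of_group_balanced_general n C P g hgC hfix
end

section
/- Let C ⊆ ℝ² be a balanced configuration with minimal distance 1, and let P ∈ C have exactly 5 neighbors. If x and y are two distinct neighbors of P that are cyclically consecutive around P (i.e., the open angular sector at P bounded by the rays Px and Py and subtending the angle ∠xPy contains no other neighbor of P), then π/3 ≤ ∠xPy < π/2. -/
open EuclideanGeometry RealInnerProductSpace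

noncomputable section

/-- The Euclidean plane. -/
abbrev E2 := EuclideanSpace ℝ (Fin 2)

/-- A configuration `C ⊆ ℝ²` is balanced if for every `P ∈ C` and every `d > 0` the set of
points of `C` at distance `d` from `P` is finite and the vectors from `P` to these points
sum to zero. -/
def IsBalanced (C : Set E2) : Prop :=
  ∀ P ∈ C, ∀ d : ℝ, 0 < d →
    {x ∈ C | dist x P = d}.Finite ∧ ∑ᶠ x ∈ {x ∈ C | dist x P = d}, (x - P) = 0

/-- `C` has minimal distance 1: distinct points are at distance at least 1, and some pair of
points is at distance exactly 1. -/
def MinDistOne (C : Set E2) : Prop :=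
  (∀ x ∈ C, ∀ y ∈ C, x ≠ y → 1 ≤ dist x y) ∧ ∃ x ∈ C, ∃ y ∈ C, dist x y = 1

/-- The set of neighbors (points of `C` at distance exactly 1) of `P`. -/
def nbrs (C : Set E2) (P : E2) : Set E2 := {x ∈ C | dist x P = 1}

/-!
Neighbours of `P` are unit vectors from `P`, pairwise at angle at least `π/3` because of the
minimal distance. If `∠ x P y ≥ π/2`, the three other neighbours are confined to the
complementary arc, of length at most `5π/6`, and stay `π/3` apart. Measuring them by an angular
coordinate along that arc, the squared norm of their sum is `3 + 2 ∑ cos (ψᵢ - ψⱼ) > 2`, while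
`‖(x - P) + (y - P)‖² ≤ 2`. Balance at distance `1` says the two sums are opposite, a contradiction.
-/

open Real InnerProductGeometry

theorem Real.Angle.abs_toReal_coe_le (x : ℝ) : |(x : Angle).toReal| ≤ |x| := by
  rcases le_or_gt |x| π with hx | hx
  · rcases (abs_le.1 hx).1.eq_or_lt with h | h
    · rw [← h, Angle.coe_neg, Angle.neg_coe_pi, Angle.toReal_pi, abs_neg, abs_of_pos pi_pos]
    · rw [Angle.toReal_coe_eq_self_iff.2 ⟨h, (abs_le.1 hx).2⟩]
  · exact (Angle.abs_toReal_le_pi _).trans hx.le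

theorem neg_one_half_lt_cos_add_cos_add_cos {a b : ℝ} (ha : π / 3 ≤ a) (hb : π / 3 ≤ b)
    (hab : a + b ≤ 5 * π / 6) : -(1 / 2) < cos a + cos b + cos (a + b) := by
  have hπ := pi_pos
  -- sum-to-product on both sides, with `(a + b) / 2 ≤ 5π/12` and `|a - b| / 2 ≤ π/12`
  have hsum : cos (π / 2) + cos (π / 3) ≤ cos a + cos b := by
    rw [cos_add_cos, cos_add_cos]
    have h₁ : cos ((π / 2 + π / 3) / 2) ≤ cos ((a + b) / 2) :=
      cos_le_cos_of_nonneg_of_le_pi (by linarith) (by linarith) (by linarith)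
    have h₂ : cos ((π / 2 - π / 3) / 2) ≤ cos ((a - b) / 2) := by
      rw [← cos_abs ((a - b) / 2)]
      exact cos_le_cos_of_nonneg_of_le_pi (abs_nonneg _) (by linarith)
        (abs_le.2 ⟨by linarith, by linarith⟩)
    have h₀ : 0 ≤ cos ((π / 2 + π / 3) / 2) := cos_nonneg_of_mem_Icc ⟨by linarith, by linarith⟩
    have h₀' : 0 ≤ cos ((π / 2 - π / 3) / 2) := cos_nonneg_of_mem_Icc ⟨by linarith, by linarith⟩
    have h₁' : 0 ≤ 2 * cos ((a + b) / 2) := by linarith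
    gcongr
  have hcos : cos π < cos (a + b) :=
    cos_lt_cos_of_nonneg_of_le_pi (by linarith) le_rfl (by linarith)
  rw [cos_pi_div_two, cos_pi_div_three] at hsum
  rw [cos_pi] at hcos
  linarith

theorem neg_one_half_lt_cos_sub_add_cos_sub_add_cos_sub {p q r ℓ : ℝ}
    (hp : p ∈ Set.Icc ℓ (ℓ + 5 * π / 6)) (hq : q ∈ Set.Icc ℓ (ℓ + 5 * π / 6))
    (hr : r ∈ Set.Icc ℓ (ℓ + 5 * π / 6))
    (hpq : π / 3 ≤ |q - p|) (hqr : π / 3 ≤ |r - q|) (hpr : π / 3 ≤ |r - p|) :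
    -(1 / 2) < cos (q - p) + cos (r - q) + cos (r - p) := by
  have hcos (s t : ℝ) : cos (s - t) = cos (t - s) := by rw [← cos_neg, neg_sub]
  wlog hpq' : p ≤ q generalizing p q
  · linarith [this hq hp (by rwa [abs_sub_comm]) hpr hqr (le_of_not_ge hpq'), hcos p q]
  wlog hqr' : q ≤ r generalizing p q r
  · rcases le_total p r with hpr' | hrp'
    · linarith [this hq hp hr hpr (by rwa [abs_sub_comm]) hpq hpr' (le_of_not_ge hqr'), hcos q r]
    · linarith [this hq hr hp (by rwa [abs_sub_comm]) hpq (by rwa [abs_sub_comm]) hrp' hpq',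
        hcos q r, hcos p r]
  have := neg_one_half_lt_cos_add_cos_add_cos (a := q - p) (b := r - q)
    (by rwa [abs_of_nonneg (by linarith)] at hpq) (by rwa [abs_of_nonneg (by linarith)] at hqr)
    (by linarith [hp.1, hr.2])
  rwa [sub_add_sub_cancel'] at this

namespace InnerProductGeometry

variable {V : Type*} [NormedAddCommGroup V] [InnerProductSpace ℝ V]

theorem pi_div_three_le_angle {u v : V} (hu : ‖u‖ = 1) (hv : ‖v‖ = 1) (huv : 1 ≤ ‖u - v‖) :
    π / 3 ≤ angle u v := by
  have hinner : ⟪u, v⟫ ≤ 1 / 2 := by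
    have := norm_sub_sq_real u v
    rw [hu, hv] at this
    nlinarith
  calc π / 3 = arccos (cos (π / 3)) := (arccos_cos (by positivity) (by linarith [pi_pos])).symm
    _ ≤ arccos ⟪u, v⟫ := arccos_le_arccos (by rwa [cos_pi_div_three])
    _ = angle u v := by rw [angle, hu, hv, mul_one, div_one]

theorem inner_nonpos_of_pi_div_two_le_angle {u v : V} (h : π / 2 ≤ angle u v) : ⟪u, v⟫ ≤ 0 := by
  rw [← cos_angle_mul_norm_mul_norm]
  exact mul_nonpos_of_nonpos_of_nonneg
    (cos_nonpos_of_pi_div_two_le_of_le h (by linarith [angle_le_pi u v, pi_pos])) (by positivity)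

end InnerProductGeometry

namespace Orientation

variable {V : Type*} [NormedAddCommGroup V] [InnerProductSpace ℝ V]
  [Fact (Module.finrank ℝ V = 2)] (o : Orientation ℝ V (Fin 2))

theorem exists_toReal_oangle_nonneg (u v : V) :
    ∃ o : Orientation ℝ V (Fin 2), 0 ≤ (o.oangle u v).toReal := by
  have := FiniteDimensional.of_fact_finrank_eq_two (K := ℝ) (V := V)
  let o₀ : Orientation ℝ V (Fin 2) := (Module.finBasisOfFinrankEq ℝ V Fact.out).orientation
  rcases le_or_gt 0 (o₀.oangle u v).toReal with h | h
  · exact ⟨o₀, h⟩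
  · have hπ : o₀.oangle u v ≠ π := fun h' => by linarith [h' ▸ Real.Angle.toReal_pi, pi_pos]
    refine ⟨-o₀, ?_⟩
    rw [oangle_neg_orientation_eq_neg, Real.Angle.toReal_neg_eq_neg_toReal_iff.2 hπ]
    linarith

variable {u w₁ w₂ : V} {α β : ℝ}

theorem oangle_eq_coe_sub (hu : u ≠ 0) (hw₁ : w₁ ≠ 0) (hw₂ : w₂ ≠ 0)
    (hα : (α : Real.Angle) = o.oangle u w₁) (hβ : (β : Real.Angle) = o.oangle u w₂) :
    o.oangle w₁ w₂ = (β - α : ℝ) := by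
  rw [Real.Angle.coe_sub, hα, hβ, o.oangle_sub_left hu hw₁ hw₂]

theorem angle_le_abs_sub (hu : u ≠ 0) (hw₁ : w₁ ≠ 0) (hw₂ : w₂ ≠ 0)
    (hα : (α : Real.Angle) = o.oangle u w₁) (hβ : (β : Real.Angle) = o.oangle u w₂) :
    InnerProductGeometry.angle w₁ w₂ ≤ |β - α| := by
  rw [o.angle_eq_abs_oangle_toReal hw₁ hw₂, o.oangle_eq_coe_sub hu hw₁ hw₂ hα hβ]
  exact Real.Angle.abs_toReal_coe_le _

theorem inner_eq_cos_sub (hu : u ≠ 0) (hw₁ : ‖w₁‖ = 1) (hw₂ : ‖w₂‖ = 1)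
    (hα : (α : Real.Angle) = o.oangle u w₁) (hβ : (β : Real.Angle) = o.oangle u w₂) :
    ⟪w₁, w₂⟫ = cos (β - α) := by
  have hw₁' : w₁ ≠ 0 := norm_ne_zero_iff.1 (by simp [hw₁])
  have hw₂' : w₂ ≠ 0 := norm_ne_zero_iff.1 (by simp [hw₂])
  rw [o.inner_eq_norm_mul_norm_mul_cos_oangle, hw₁, hw₂, o.oangle_eq_coe_sub hu hw₁' hw₂' hα hβ,
    Real.Angle.cos_coe, one_mul, one_mul]

theorem exists_coe_eq_oangle_mem_Icc {v w : V} {δ : ℝ} (hu : u ≠ 0) (hv : v ≠ 0) (hw : w ≠ 0)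
    (huv : 0 ≤ (o.oangle u v).toReal) (huw : δ ≤ InnerProductGeometry.angle u w)
    (hwv : δ ≤ InnerProductGeometry.angle w v)
    (hbetween : InnerProductGeometry.angle u w + InnerProductGeometry.angle w v ≠
      InnerProductGeometry.angle u v) :
    ∃ ψ ∈ Set.Icc (InnerProductGeometry.angle u v + δ) (2 * π - δ),
      (ψ : Real.Angle) = o.oangle u w := by
  set γ := (o.oangle u v).toReal
  have hγ : (γ : Real.Angle) = o.oangle u v := Real.Angle.coe_toReal _
  have hangle : InnerProductGeometry.angle u v = γ := by
    rw [o.angle_eq_abs_oangle_toReal hu hv, abs_of_nonneg huv]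
  -- the representative `ψ ∈ [0, 2π)` of `o.oangle u w`; `ψ ≤ γ` would put `w` between `u` and `v`
  set ψ := toIcoMod two_pi_pos 0 (o.oangle u w).toReal
  have hψ : (ψ : Real.Angle) = o.oangle u w := by
    rw [Real.Angle.coe_toIcoMod, Real.Angle.coe_toReal]
  obtain ⟨hψ₀, hψ₂π⟩ : 0 ≤ ψ ∧ ψ < 0 + 2 * π := toIcoMod_mem_Ico two_pi_pos 0 _
  have h₀ : ((0 : ℝ) : Real.Angle) = o.oangle u u := by rw [o.oangle_self, Real.Angle.coe_zero]
  have h₂π : ((2 * π : ℝ) : Real.Angle) = o.oangle u u := by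
    rw [o.oangle_self, Real.Angle.coe_two_pi]
  have hwv' := o.angle_le_abs_sub hu hw hv hψ hγ
  refine ⟨ψ, ?_, hψ⟩
  rcases le_or_gt ψ γ with hψγ | hγψ
  · refine absurd (le_antisymm ?_ (InnerProductGeometry.angle_le_angle_add_angle u w v)) hbetween
    have huw' := o.angle_le_abs_sub hu hu hw h₀ hψ
    rw [abs_of_nonneg (by linarith)] at hwv' huw'
    linarith
  · have huw' := o.angle_le_abs_sub hu hu hw h₂π hψ
    rw [abs_of_neg (by linarith)] at hwv' huw'
    constructor <;> linarith

variable {Pt : Type*} [MetricSpace Pt] [NormedAddTorsor V Pt]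

theorem norm_vsub_add_vsub_lt_norm_vsub_add_vsub_add_vsub {P x y z₁ z₂ z₃ : Pt}
    (hx : dist x P = 1) (hy : dist y P = 1)
    (ho : 0 ≤ (o.oangle (x -ᵥ P) (y -ᵥ P)).toReal) (hright : π / 2 ≤ ∠ x P y)
    (hz : ∀ z ∈ ({z₁, z₂, z₃} : Set Pt), dist z P = 1 ∧ π / 3 ≤ ∠ x P z ∧ π / 3 ≤ ∠ z P y ∧
      ∠ x P z + ∠ z P y ≠ ∠ x P y)
    (h₁₂ : π / 3 ≤ ∠ z₁ P z₂) (h₂₃ : π / 3 ≤ ∠ z₂ P z₃) (h₁₃ : π / 3 ≤ ∠ z₁ P z₃) :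
    ‖(x -ᵥ P) + (y -ᵥ P)‖ < ‖(z₁ -ᵥ P) + (z₂ -ᵥ P) + (z₃ -ᵥ P)‖ := by
  have hunit {z : Pt} (h : dist z P = 1) : ‖z -ᵥ P‖ = 1 := (dist_eq_norm_vsub V z P).symm.trans h
  have hne {z : Pt} (h : dist z P = 1) : z -ᵥ P ≠ 0 := norm_ne_zero_iff.1 (by simp [hunit h])
  have hx₀ := hne hx
  have hcoord : ∀ z ∈ ({z₁, z₂, z₃} : Set Pt), ‖z -ᵥ P‖ = 1 ∧ z -ᵥ P ≠ 0 ∧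
      ∃ ψ ∈ Set.Icc (∠ x P y + π / 3) (∠ x P y + π / 3 + 5 * π / 6),
        (ψ : Real.Angle) = o.oangle (x -ᵥ P) (z -ᵥ P) := by
    intro z hmem
    obtain ⟨hzP, hxz, hzy, hbetween⟩ := hz z hmem
    obtain ⟨ψ, ⟨hψℓ, hψ⟩, hψo⟩ :=
      o.exists_coe_eq_oangle_mem_Icc hx₀ (hne hy) (hne hzP) ho hxz hzy hbetween
    exact ⟨hunit hzP, hne hzP, ψ, ⟨hψℓ, by linarith⟩, hψo⟩
  obtain ⟨hn₁, hw₁, ψ₁, hψ₁, ho₁⟩ := hcoord z₁ (by simp)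
  obtain ⟨hn₂, hw₂, ψ₂, hψ₂, ho₂⟩ := hcoord z₂ (by simp)
  obtain ⟨hn₃, hw₃, ψ₃, hψ₃, ho₃⟩ := hcoord z₃ (by simp)
  have hcos := neg_one_half_lt_cos_sub_add_cos_sub_add_cos_sub hψ₁ hψ₂ hψ₃
    (h₁₂.trans (o.angle_le_abs_sub hx₀ hw₁ hw₂ ho₁ ho₂))
    (h₂₃.trans (o.angle_le_abs_sub hx₀ hw₂ hw₃ ho₂ ho₃))
    (h₁₃.trans (o.angle_le_abs_sub hx₀ hw₁ hw₃ ho₁ ho₃))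
  have hxy := InnerProductGeometry.inner_nonpos_of_pi_div_two_le_angle hright
  rw [← sq_lt_sq₀ (norm_nonneg _) (norm_nonneg _), norm_add_sq_real, norm_add_sq_real,
    norm_add_sq_real, inner_add_left, hunit hx, hunit hy, hn₁, hn₂, hn₃,
    o.inner_eq_cos_sub hx₀ hn₁ hn₂ ho₁ ho₂, o.inner_eq_cos_sub hx₀ hn₁ hn₃ ho₁ ho₃,
    o.inner_eq_cos_sub hx₀ hn₂ hn₃ ho₂ ho₃]
  linarith

end Orientation

theorem Set.exists_finsum_mem_eq_of_encard_eq_five {α M : Type*} [AddCommMonoid M] (f : α → M)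
    {s : Set α} (hs : s.encard = 5) {x y : α} (hx : x ∈ s) (hy : y ∈ s) (hxy : x ≠ y) :
    ∃ a b c, a ≠ b ∧ a ≠ c ∧ b ≠ c ∧ s \ {x, y} = {a, b, c} ∧
      ∑ᶠ i ∈ s, f i = f x + f y + (f a + f b + f c) := by
  have hfin : s.Finite := Set.finite_of_encard_eq_coe hs
  have hpair : {x, y} ⊆ s := Set.insert_subset hx (Set.singleton_subset_iff.2 hy)
  obtain ⟨a, b, c, hab, hac, hbc, habc⟩ :
      ∃ a b c, a ≠ b ∧ a ≠ c ∧ b ≠ c ∧ s \ {x, y} = {a, b, c} := by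
    apply Set.ncard_eq_three.1
    rw [Set.ncard_sdiff hpair (hfin.subset hpair), Set.ncard_pair hxy, Set.ncard_def, hs]
    rfl
  refine ⟨a, b, c, hab, hac, hbc, habc, ?_⟩
  rw [← Set.union_sdiff_cancel hpair, finsum_mem_union Set.disjoint_sdiff_right
    (Set.toFinite _) hfin.sdiff, finsum_mem_pair hxy, habc,
    finsum_mem_insert _ (by simp [hab, hac]) (Set.toFinite _), finsum_mem_pair hbc]
  simp only [add_assoc]

instance inst_s5 : Fact (Module.finrank ℝ E2 = 2) := ⟨finrank_euclideanSpace_fin⟩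

theorem MinDistOne.pi_div_three_le_angle {C : Set E2} (hmin : MinDistOne C) {P a b : E2}
    (ha : a ∈ nbrs C P) (hb : b ∈ nbrs C P) (hab : a ≠ b) : π / 3 ≤ ∠ a P b :=
  InnerProductGeometry.pi_div_three_le_angle ((dist_eq_norm_vsub E2 a P).symm.trans ha.2)
    ((dist_eq_norm_vsub E2 b P).symm.trans hb.2)
    (by rw [vsub_sub_vsub_cancel_right, ← dist_eq_norm_vsub]; exact hmin.1 a ha.1 b hb.1 hab)

/-- In a balanced configuration with minimal distance 1, if `P` has exactly 5 neighbors and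
`x, y` are two distinct neighbors of `P` that are cyclically consecutive around `P` (the open
angular sector at `P` between the rays `Px` and `Py` subtending the angle `∠ x P y` contains
no other neighbor of `P`), then `π/3 ≤ ∠ x P y < π/2`. -/
theorem five_neighbors_angle_bounds (C : Set E2)
    (hbal : IsBalanced C) (hmin : MinDistOne C)
    (P : E2) (hP : P ∈ C) (h5 : (nbrs C P).encard = 5)
    (x y : E2) (hx : x ∈ nbrs C P) (hy : y ∈ nbrs C P) (hxy : x ≠ y)
    (hconsec : ∀ z ∈ nbrs C P, z ≠ x → z ≠ y →
      ¬(∠ x P z ≠ 0 ∧ ∠ z P y ≠ 0 ∧ ∠ x P z + ∠ z P y = ∠ x P y)) :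
    Real.pi / 3 ≤ ∠ x P y ∧ ∠ x P y < Real.pi / 2 := by
  refine ⟨hmin.pi_div_three_le_angle hx hy hxy, not_le.1 fun hright => ?_⟩
  obtain ⟨z₁, z₂, z₃, h₁₂, h₁₃, h₂₃, hz, hsum⟩ :=
    Set.exists_finsum_mem_eq_of_encard_eq_five (· - P) h5 hx hy hxy
  have hbalP : ∑ᶠ z ∈ nbrs C P, (z - P) = 0 := (hbal P hP 1 one_pos).2
  rw [hsum, add_eq_zero_iff_eq_neg'] at hbalP
  have hout : ∀ z ∈ nbrs C P \ {x, y},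
      dist z P = 1 ∧ π / 3 ≤ ∠ x P z ∧ π / 3 ≤ ∠ z P y ∧ ∠ x P z + ∠ z P y ≠ ∠ x P y := by
    rintro z ⟨hzN, hzxy⟩
    obtain ⟨hzx, hzy⟩ : z ≠ x ∧ z ≠ y := by simpa [not_or] using hzxy
    have hxz := hmin.pi_div_three_le_angle hx hzN hzx.symm
    have hzy' := hmin.pi_div_three_le_angle hzN hy hzy
    exact ⟨hzN.2, hxz, hzy', fun h => hconsec z hzN hzx hzy
      ⟨(lt_of_lt_of_le (by positivity) hxz).ne', (lt_of_lt_of_le (by positivity) hzy').ne', h⟩⟩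
  have hzN : {z₁, z₂, z₃} ⊆ nbrs C P := hz ▸ Set.sdiff_subset
  simp only [Set.insert_subset_iff, Set.singleton_subset_iff] at hzN
  obtain ⟨hz₁, hz₂, hz₃⟩ := hzN
  obtain ⟨o, ho⟩ := Orientation.exists_toReal_oangle_nonneg (x -ᵥ P) (y -ᵥ P)
  have hlt := o.norm_vsub_add_vsub_lt_norm_vsub_add_vsub_add_vsub hx.2 hy.2 ho hright (hz ▸ hout)
    (hmin.pi_div_three_le_angle hz₁ hz₂ h₁₂) (hmin.pi_div_three_le_angle hz₂ hz₃ h₂₃)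
    (hmin.pi_div_three_le_angle hz₁ hz₃ h₁₃)
  simp only [vsub_eq_sub, hbalP, norm_neg, lt_irrefl] at hlt
end
end

section
/- Let P ∈ ℝ² and let P₁, …, P₆ be six distinct points, each at distance exactly 1 from P, with any two distinct Pᵢ, Pⱼ at distance at least 1 from each other. Then the six points form a regular hexagon centered at P: the angles between cyclically consecutive points at P are all exactly π/3; equivalently, there is a unit vector e such that {P₁,…,P₆} = {P + R(kπ/3)·e : k = 0,1,…,5}, where R(θ) denotes rotation of ℝ² by angle θ. -/
/-!
Translate so that `P = 0`. The separation `1 ≤ ‖vᵢ - vⱼ‖` of unit vectors says `⟪vᵢ, vⱼ⟫ ≤ 1/2`,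
i.e. any two of them make an angle at least `π/3`. Sorting their oriented angles from a fixed one,
the six consecutive gaps around the circle (the last one wrapping around) are each at least `π/3`
and add up to `2π`, so all of them equal `π/3`.
-/

open EuclideanGeometry

noncomputable section

instance : Fact (Module.finrank ℝ E2 = 2) := ⟨finrank_euclideanSpace_fin⟩

def stdOrientation : Orientation ℝ E2 (Fin 2) :=
  (EuclideanSpace.basisFun (Fin 2) ℝ).toBasis.orientation

open Real RealInnerProductSpace

theorem real_inner_le_half_of_one_le_norm_sub {V : Type*} [NormedAddCommGroup V]
    [InnerProductSpace ℝ V] {x y : V} (hx : ‖x‖ = 1) (hy : ‖y‖ = 1) (h : 1 ≤ ‖x - y‖) :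
    ⟪x, y⟫ ≤ 1 / 2 := by
  have hsq := norm_sub_sq_real x y
  rw [hx, hy] at hsq
  linarith [one_le_pow₀ (n := 2) h]

theorem Real.le_of_cos_le_cos {x α : ℝ} (hx : 0 ≤ x) (hα : α ≤ π) (h : cos x ≤ cos α) :
    α ≤ x := by
  by_contra! hlt
  exact (cos_lt_cos_of_nonneg_of_le_pi hx hα hlt).not_ge h

theorem Fin.eq_add_nsmul_of_le_sub_succ {α : Type*} [AddCommGroup α] [PartialOrder α]
    [IsOrderedAddMonoid α] {n : ℕ} {g : Fin (n + 1) → α} {δ : α}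
    (hstep : ∀ i : Fin n, δ ≤ g i.succ - g i.castSucc)
    (hspan : g (Fin.last n) - g 0 ≤ n • δ) (k : Fin (n + 1)) :
    g k = g 0 + (k : ℕ) • δ := by
  -- the excess over the progression is monotone, vanishes at `0` and is nonpositive at `last n`
  set excess : Fin (n + 1) → α := fun k => g k - g 0 - (k : ℕ) • δ with hexcess
  have hmono : Monotone excess := Fin.monotone_iff_le_succ.2 fun i => by
    have hdiff : excess i.succ - excess i.castSucc = g i.succ - g i.castSucc - δ := by
      simp only [hexcess, Fin.val_succ, Fin.val_castSucc, succ_nsmul]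
      abel
    exact sub_nonneg.1 (hdiff ▸ sub_nonneg.2 (hstep i))
  have hzero : excess 0 = 0 := by simp [hexcess]
  have hlast : excess (Fin.last n) ≤ 0 := by simpa [hexcess] using hspan
  have hk : g k - g 0 - (k : ℕ) • δ = 0 :=
    le_antisymm ((hmono (Fin.le_last k)).trans hlast) (hzero ▸ hmono (Fin.zero_le k))
  rwa [sub_sub, sub_eq_zero] at hk

theorem Real.eq_add_mul_of_cos_sub_le {n : ℕ} (hn : n ≠ 0) {g : Fin (n + 1) → ℝ}
    (hg : Monotone g) (hspan : g (Fin.last n) ≤ g 0 + 2 * π)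
    (hcos : ∀ i j, i ≠ j → cos (g i - g j) ≤ cos (2 * π / (n + 1))) (k : Fin (n + 1)) :
    g k = g 0 + (k : ℕ) * (2 * π / (n + 1)) := by
  set α := 2 * π / (n + 1) with hα
  have hαpi : α ≤ π := by
    rw [hα, div_le_iff₀ (by positivity)]
    have : (1 : ℝ) ≤ n := by exact_mod_cast Nat.one_le_iff_ne_zero.2 hn
    nlinarith [pi_pos]
  have hstep : ∀ i : Fin n, α ≤ g i.succ - g i.castSucc := fun i =>
    le_of_cos_le_cos (sub_nonneg.2 (hg i.castSucc_le_succ)) hαpi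
      (hcos _ _ Fin.castSucc_lt_succ.ne')
  -- the gap from `g (last n)` back around to `g 0 + 2π` is at least `α` as well
  have hwrap : α ≤ 2 * π - (g (Fin.last n) - g 0) := by
    refine le_of_cos_le_cos (by linarith) hαpi ?_
    rw [cos_two_pi_sub]
    exact hcos _ _ (Fin.val_ne_zero_iff.1 hn)
  have htotal : (n + 1) * α = 2 * π := by rw [hα]; field_simp
  have := Fin.eq_add_nsmul_of_le_sub_succ hstep (by rw [nsmul_eq_mul]; linarith) k
  rwa [nsmul_eq_mul] at this

theorem Orientation.exists_perm_eq_rotation_of_inner_le_cos {V : Type*} [NormedAddCommGroup V]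
    [InnerProductSpace ℝ V] [Fact (Module.finrank ℝ V = 2)] (o : Orientation ℝ V (Fin 2))
    {n : ℕ} (hn : n ≠ 0) {v : Fin (n + 1) → V} (hv : ∀ i, ‖v i‖ = 1)
    (hsep : ∀ i j, i ≠ j → ⟪v i, v j⟫ ≤ cos (2 * π / (n + 1))) :
    ∃ σ : Equiv.Perm (Fin (n + 1)), ∀ k,
      v (σ k) = o.rotation ((((k : ℕ) : ℝ) * (2 * π / (n + 1)) : ℝ) : Real.Angle) (v (σ 0)) := by
  have hv0 : ∀ i, v i ≠ 0 := fun i => norm_ne_zero_iff.1 (by simp [hv])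
  set θ : Fin (n + 1) → ℝ := fun i => (o.oangle (v 0) (v i)).toReal with hθ
  have hθsub : ∀ i j, ((θ i - θ j : ℝ) : Real.Angle) = o.oangle (v j) (v i) := fun i j => by
    simp only [hθ, Real.Angle.coe_sub, Real.Angle.coe_toReal]
    exact o.oangle_sub_left (hv0 0) (hv0 j) (hv0 i)
  have hcos : ∀ i j, cos (θ i - θ j) = ⟪v j, v i⟫ := fun i j => by
    rw [← Real.Angle.cos_coe, hθsub, o.cos_oangle_eq_inner_div_norm_mul_norm (hv0 j) (hv0 i),
      hv, hv, mul_one, div_one]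
  have hθbound : ∀ i, -π < θ i ∧ θ i ≤ π := fun i =>
    ⟨Real.Angle.neg_pi_lt_toReal _, Real.Angle.toReal_le_pi _⟩
  set σ := Tuple.sort θ
  have harith := Real.eq_add_mul_of_cos_sub_le hn (Tuple.monotone_sort θ)
    (by simp only [Function.comp_apply]; linarith [hθbound (σ (Fin.last n)), hθbound (σ 0)])
    (fun i j hij => (hcos _ _).trans_le (hsep _ _ (σ.injective.ne hij.symm)))
  refine ⟨σ, fun k => ?_⟩
  have hrot := (o.rotation_oangle_eq_iff_norm_eq (v (σ 0)) (v (σ k))).2 (by rw [hv, hv])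
  rw [← hθsub, show θ (σ k) = θ (σ 0) + (k : ℕ) * (2 * π / (n + 1)) from harith k,
    add_sub_cancel_left] at hrot
  exact hrot.symm

theorem six_neighbors_regular_hexagon_general (P : E2) (p : Fin 6 → E2)
    (hdist : ∀ i, dist (p i) P = 1)
    (hsep : ∀ i j, i ≠ j → 1 ≤ dist (p i) (p j)) :
    ∃ e : E2, ‖e‖ = 1 ∧
      Set.range p =
        {x | ∃ k : Fin 6,
          x = P + stdOrientation.rotation ((((k : ℕ) : ℝ) * (Real.pi / 3) : ℝ) : Real.Angle) e} := by
  set v : Fin 6 → E2 := fun i => p i - P with hv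
  have hvnorm : ∀ i, ‖v i‖ = 1 := fun i => by simpa [hv, dist_eq_norm] using hdist i
  have hsixth : 2 * π / ((5 : ℕ) + 1) = π / 3 := by norm_num; ring
  have hinner : ∀ i j, i ≠ j → ⟪v i, v j⟫ ≤ cos (2 * π / ((5 : ℕ) + 1)) := fun i j hij => by
    rw [hsixth, cos_pi_div_three]
    exact real_inner_le_half_of_one_le_norm_sub (hvnorm i) (hvnorm j)
      (by simpa [hv, dist_eq_norm] using hsep i j hij)
  obtain ⟨σ, hσ⟩ :=
    stdOrientation.exists_perm_eq_rotation_of_inner_le_cos (by norm_num) hvnorm hinner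
  refine ⟨v (σ 0), hvnorm _, ?_⟩
  rw [← EquivLike.range_comp p σ]
  ext x
  simp only [Set.mem_range, Set.mem_ofPred_eq, Function.comp_apply]
  refine exists_congr fun k => ?_
  rw [← hsixth, ← hσ k, hv, add_sub_cancel, eq_comm]

/-- If six distinct points are each at distance exactly 1 from `P`, with any two of them at
distance at least 1 from each other, then they form a regular hexagon centered at `P`:
there is a unit vector `e` such that the six points are the rotations of `P + e` about `P`
through the angles `kπ/3`, `k = 0, 1, …, 5`. -/
theorem six_neighbors_regular_hexagon (P : E2) (p : Fin 6 → E2)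
    (hinj : Function.Injective p)
    (hdist : ∀ i, dist (p i) P = 1)
    (hsep : ∀ i j, i ≠ j → 1 ≤ dist (p i) (p j)) :
    ∃ e : E2, ‖e‖ = 1 ∧
      Set.range p =
        {x | ∃ k : Fin 6,
          x = P + stdOrientation.rotation ((((k : ℕ) : ℝ) * (Real.pi / 3) : ℝ) : Real.Angle) e} :=
  six_neighbors_regular_hexagon_general P p hdist hsep
end
end

section
/- Let C ⊆ ℝ² be a balanced configuration with minimal distance 1, and suppose some point P ∈ C has exactly 6 neighbors. Then C is a triangular lattice: there exist unit vectors u, v with ⟨u,v⟩ = 1/2 such that C = {P + a·u + b·v : a, b ∈ ℤ}. -/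
/-!
Identify the plane with `ℂ` and put `ζ = exp (iπ/3)`. Unit vectors at mutual distance `≥ 1` have
arguments at least `π/3` apart, so six neighbours of a point `q` are the vertices `q + u ζ^k` of a
regular hexagon. Conversely, if `q` has neighbours `q + w ζ^k` for `k = 2, 3, -2`, balance at `q`
makes the remaining neighbour directions sum to `2 w`; these lie in the arc `|arg (·/w)| ≤ π/3`, so
there are at least three of them, and three fit there only as `w ζ⁻¹, w, w ζ`. Hence a full hexagon
around a point forces full hexagons around each of its vertices, and so around every point of
`P + ℤ u + ℤ u ζ`. Every point of the plane is at distance `< 1` from this lattice, so minimal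
distance `1` leaves no room for further points of `C`.
-/


open EuclideanGeometry RealInnerProductSpace

noncomputable section

theorem Finset.card_le_of_separated {δ : ℝ} (hδ : 0 < δ) {n : ℕ} {a : ℝ} {s : Finset ℝ}
    (hs : ∀ x ∈ s, a ≤ x ∧ x ≤ a + n * δ) (hsep : (s : Set ℝ).Pairwise (fun x y => δ ≤ |x - y|)) :
    s.card ≤ n + 1 := by
  have hpos : ∀ x ∈ s, 0 ≤ (x - a) / δ := fun x hx => div_nonneg (by linarith [hs x hx]) hδ.le
  calc s.card ≤ (Finset.range (n + 1)).card := by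
        refine Finset.card_le_card_of_injOn (fun x => ⌊(x - a) / δ⌋₊) (fun x hx => ?_) ?_
        · rw [Finset.coe_range, Set.mem_Iio, Nat.floor_lt (hpos x hx), div_lt_iff₀ hδ]
          push_cast
          linarith [hs x hx]
        · intro x hx y hy hxy
          by_contra hne
          have hx' := (Nat.floor_eq_iff (hpos x hx)).1 rfl
          have hy' := (Nat.floor_eq_iff (hpos y hy)).1 hxy.symm
          have : |(x - a) / δ - (y - a) / δ| < 1 := abs_sub_lt_iff.2 ⟨by linarith, by linarith⟩
          rw [← sub_div, sub_sub_sub_cancel_right, abs_div, abs_of_pos hδ,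
            div_lt_one hδ] at this
          exact (hsep hx hy hne).not_gt this
    _ = n + 1 := Finset.card_range _

theorem Finset.add_nat_mul_mem_of_separated {δ : ℝ} (hδ : 0 < δ) {n : ℕ} {a : ℝ} {s : Finset ℝ}
    (hs : ∀ x ∈ s, a ≤ x ∧ x ≤ a + n * δ) (hsep : (s : Set ℝ).Pairwise (fun x y => δ ≤ |x - y|))
    (hcard : n + 1 ≤ s.card) {k : ℕ} (hk : k ≤ n) : a + k * δ ∈ s := by
  induction n generalizing a s k with
  | zero =>
    obtain ⟨x, hx⟩ := Finset.card_pos.1 (by omega : 0 < s.card)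
    obtain rfl : k = 0 := by omega
    have := hs x hx
    convert hx using 1
    push_cast at this ⊢
    linarith
  | succ n ih =>
    set high := s.filter (a + δ ≤ ·)
    set low := s.filter fun x => ¬a + δ ≤ x
    have hhigh_bounds : ∀ x ∈ high, a + δ ≤ x ∧ x ≤ a + δ + n * δ := by
      intro x hx
      simp only [high, Finset.mem_filter] at hx
      have := (hs x hx.1).2
      push_cast at this
      constructor <;> linarith
    have hhigh_sep : (high : Set ℝ).Pairwise (fun x y => δ ≤ |x - y|) :=
      hsep.mono (Finset.coe_subset.2 (Finset.filter_subset _ _))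
    have hlow : low.card ≤ 1 := by
      refine Finset.card_le_one.2 fun x hx y hy => by_contra fun hxy => ?_
      simp only [low, Finset.mem_filter, not_le] at hx hy
      have : δ ≤ |x - y| := hsep hx.1 hy.1 hxy
      rcases le_abs'.1 this with h | h <;> linarith [(hs x hx.1).1, (hs y hy.1).1]
    have hsplit : high.card + low.card = s.card := Finset.card_filter_add_card_filter_not _
    have hhigh := Finset.card_le_of_separated hδ hhigh_bounds hhigh_sep
    have ih' := fun j (hj : j ≤ n) => ih hhigh_bounds hhigh_sep (by omega) hj
    rcases k with _ | k
    · obtain ⟨x, hx⟩ := Finset.card_pos.1 (by omega : 0 < low.card)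
      simp only [low, Finset.mem_filter, not_le] at hx
      have hnext := Finset.mem_filter.1 (ih' 0 (Nat.zero_le _))
      simp only [Nat.cast_zero, zero_mul, add_zero] at hnext ⊢
      have : δ ≤ |x - (a + δ)| := hsep hx.1 hnext.1 (by intro h; linarith)
      convert hx.1 using 1
      rcases le_abs'.1 this with h | h <;> linarith [(hs x hx.1).1]
    · convert (Finset.mem_filter.1 (ih' k (by omega))).1 using 1
      push_cast
      ring

namespace TriangularLattice

open Complex
open scoped Real ComplexConjugate

def ζ : ℂ := exp (↑(π / 3) * I)

lemma ζ_re : ζ.re = 1 / 2 := by rw [ζ, exp_ofReal_mul_I_re, Real.cos_pi_div_three]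

lemma ζ_im : ζ.im = √3 / 2 := by rw [ζ, exp_ofReal_mul_I_im, Real.sin_pi_div_three]

lemma ζ_ne_zero : ζ ≠ 0 := exp_ne_zero _

lemma norm_ζ : ‖ζ‖ = 1 := norm_exp_ofReal_mul_I _

lemma norm_ζ_zpow (k : ℤ) : ‖ζ ^ k‖ = 1 := by rw [norm_zpow, norm_ζ, one_zpow]

lemma ζ_zpow (k : ℤ) : ζ ^ k = exp (↑(k * (π / 3)) * I) := by
  rw [ζ, ← exp_int_mul]
  push_cast
  ring_nf

lemma one_add_ζ_sq : 1 + ζ ^ 2 = ζ := by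
  have h3 := Real.mul_self_sqrt (show (0 : ℝ) ≤ 3 by norm_num)
  apply Complex.ext <;> simp only [add_re, add_im, one_re, one_im, sq, mul_re, mul_im, ζ_re, ζ_im]
  · linear_combination -h3 / 4
  · ring

lemma ζ_pow_three : ζ ^ 3 = -1 := by linear_combination (ζ + 1) * one_add_ζ_sq

lemma ζ_zpow_add_three (k : ℤ) : ζ ^ (k + 3) = -ζ ^ k := by
  rw [zpow_add₀ ζ_ne_zero, zpow_ofNat, ζ_pow_three, mul_neg_one]

lemma ζ_zpow_sub_one_add_ζ_zpow_add_one (k : ℤ) : ζ ^ (k - 1) + ζ ^ (k + 1) = ζ ^ k := by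
  have h : ζ ^ (k + 1) = ζ ^ (k - 1) * ζ ^ 2 := by
    rw [← zpow_natCast, ← zpow_add₀ ζ_ne_zero]; ring_nf
  rw [h, show ζ ^ k = ζ ^ (k - 1) * ζ by rw [← zpow_add_one₀ ζ_ne_zero, sub_add_cancel]]
  linear_combination ζ ^ (k - 1) * one_add_ζ_sq

lemma ζ_zpow_emod (k : ℤ) : ζ ^ k = ζ ^ (k % 6) := by
  have h6 : ζ ^ (6 : ℤ) = 1 := by
    rw [show (6 : ℤ) = 0 + 3 + 3 by norm_num, ζ_zpow_add_three, ζ_zpow_add_three, neg_neg,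
      zpow_zero]
  conv_lhs => rw [← Int.emod_add_mul_ediv k 6, zpow_add₀ ζ_ne_zero, zpow_mul, h6, one_zpow, mul_one]

lemma forall_ζ_zpow_of_Ico {p : ℂ → Prop} (a : ℤ) (h : ∀ j, a ≤ j → j < a + 6 → p (ζ ^ j))
    (k : ℤ) : p (ζ ^ k) := by
  have hk : ζ ^ k = ζ ^ (a + (k - a) % 6) := by
    rw [ζ_zpow_emod k, ζ_zpow_emod (a + _), Int.add_emod, Int.emod_emod_of_dvd _ (dvd_refl _),
      ← Int.add_emod, add_sub_cancel]
  rw [hk]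
  exact h _ (by omega) (by omega)

lemma arg_ζ_zpow {k : ℤ} (hk₁ : -3 < k) (hk₂ : k ≤ 3) : arg (ζ ^ k) = k * (π / 3) := by
  have h₁ : (-2 : ℝ) ≤ k := by exact_mod_cast (by omega : (-2 : ℤ) ≤ k)
  have h₂ : (k : ℝ) ≤ 3 := by exact_mod_cast hk₂
  rw [ζ_zpow, arg_exp_mul_I, toIocMod_eq_self]
  constructor <;> nlinarith [Real.pi_pos]

lemma cos_arg_of_norm_eq_one {z : ℂ} (hz : ‖z‖ = 1) : Real.cos (arg z) = z.re := by
  rw [cos_arg (norm_ne_zero_iff.1 (by rw [hz]; exact one_ne_zero)), hz, div_one]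

lemma abs_arg_le_of_cos_le_re {z : ℂ} {β : ℝ} (hz : ‖z‖ = 1) (hβ : 0 ≤ β)
    (h : Real.cos β ≤ z.re) : |arg z| ≤ β := by
  by_contra! hlt
  have := Real.cos_lt_cos_of_nonneg_of_le_pi hβ (abs_arg_le_pi z) hlt
  rw [Real.cos_abs, cos_arg_of_norm_eq_one hz] at this
  linarith

lemma norm_sub_sq_of_norm_eq_one {z w : ℂ} (hz : ‖z‖ = 1) (hw : ‖w‖ = 1) :
    ‖z - w‖ ^ 2 = 2 - 2 * (z.re * w.re + z.im * w.im) := by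
  have hz2 := Complex.sq_norm z
  have hw2 := Complex.sq_norm w
  rw [hz, normSq_apply] at hz2
  rw [hw, normSq_apply] at hw2
  rw [Complex.sq_norm, normSq_apply, sub_re, sub_im]
  linear_combination -hz2 - hw2

lemma pi_div_three_le_abs_arg_sub {z w : ℂ} (hz : ‖z‖ = 1) (hw : ‖w‖ = 1) (h : 1 ≤ ‖z - w‖) :
    π / 3 ≤ |arg z - arg w| := by
  have hcos : Real.cos (arg z - arg w) = z.re * w.re + z.im * w.im := by
    rw [Real.cos_sub, cos_arg_of_norm_eq_one hz, cos_arg_of_norm_eq_one hw, sin_arg, sin_arg, hz,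
      hw, div_one, div_one]
  have hnorm := norm_sub_sq_of_norm_eq_one hz hw
  by_contra! hlt
  have := Real.cos_lt_cos_of_nonneg_of_le_pi (abs_nonneg _) (by linarith [Real.pi_pos]) hlt
  rw [Real.cos_abs, hcos, Real.cos_pi_div_three] at this
  nlinarith

/-- The arguments of `A` are `π/3`-separated points of an interval of length `2m · π/3`; with
`2m + 1` of them they must be all the multiples `k · π/3` in it. -/
lemma ζ_zpow_mem_of_separated (A : Finset ℂ) (m : ℕ) (hunit : ∀ z ∈ A, ‖z‖ = 1)
    (hsep : (A : Set ℂ).Pairwise fun z w => 1 ≤ ‖z - w‖)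
    (harg : ∀ z ∈ A, |arg z| ≤ m * (π / 3)) (hcard : 2 * m + 1 ≤ A.card)
    {k : ℤ} (hk : |k| ≤ m) : ζ ^ k ∈ A := by
  obtain ⟨hk₁, hk₂⟩ := abs_le.1 hk
  have hinj : Set.InjOn arg A := fun z hz w hw h =>
    ext_norm_arg (by rw [hunit z hz, hunit w hw]) h
  have hmem := Finset.add_nat_mul_mem_of_separated (by positivity : 0 < π / 3) (n := 2 * m)
    (a := -(m * (π / 3))) (s := A.image arg)
    (fun x hx => by
      obtain ⟨z, hz, rfl⟩ := Finset.mem_image.1 hx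
      have := abs_le.1 (harg z hz)
      push_cast
      constructor <;> linarith)
    (by
      rintro _ hx _ hy hxy
      obtain ⟨z, hz, rfl⟩ := Finset.mem_image.1 hx
      obtain ⟨w, hw, rfl⟩ := Finset.mem_image.1 hy
      exact pi_div_three_le_abs_arg_sub (hunit z hz) (hunit w hw)
        (hsep hz hw fun h => hxy (h ▸ rfl)))
    (by rwa [Finset.card_image_of_injOn hinj]) (k := (k + m).toNat) (by omega)
  obtain ⟨z, hz, hzarg⟩ := Finset.mem_image.1 hmem
  have hk' : (((k + m).toNat : ℕ) : ℝ) = k + m := by exact_mod_cast Int.toNat_of_nonneg (by omega)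
  rw [hk'] at hzarg
  have hzζ : z = ζ ^ k := by
    rw [← norm_mul_exp_arg_mul_I z, hunit z hz, hzarg, ζ_zpow]
    push_cast
    ring_nf
  exact hzζ ▸ hz

lemma injOn_ζ_zpow : Set.InjOn (ζ ^ · : ℤ → ℂ) (Set.Ioc (-3) 3) := fun j hj k hk h => by
  have := congrArg arg h
  simp only at this
  rw [arg_ζ_zpow hj.1 hj.2, arg_ζ_zpow hk.1 hk.2] at this
  exact_mod_cast mul_right_cancel₀ (by positivity) this

lemma three_le_card_of_sum_eq_two (S : Finset ℂ) (hS : ∀ s ∈ S, ‖s‖ = 1)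
    (hsum : ∑ s ∈ S, s = 2) : 3 ≤ S.card := by
  by_contra! hlt
  have hre : ∑ s ∈ S, (1 - s.re) = S.card - 2 := by
    rw [Finset.sum_sub_distrib, ← re_sum, hsum]
    simp
  have hnonneg : ∀ s ∈ S, 0 ≤ 1 - s.re := fun s hs =>
    sub_nonneg.2 ((re_le_norm s).trans (hS s hs).le)
  have hzero := (Finset.sum_eq_zero_iff_of_nonneg hnonneg).1 (le_antisymm
    (by rw [hre]; exact_mod_cast (by omega : (S.card : ℤ) - 2 ≤ 0))
    (Finset.sum_nonneg hnonneg))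
  have hsub : S ⊆ {1} := fun s hs => by
    have hre1 : s.re = 1 := by linarith [hzero s hs]
    have := norm_sub_sq_of_norm_eq_one (hS s hs) norm_one
    simp [hre1] at this
    simp [sub_eq_zero.1 this]
  rcases Finset.subset_singleton_iff.1 hsub with rfl | rfl <;> norm_num at hsum

lemma abs_arg_neg_le_of_one_le_norm_sub_one {t : ℂ} (ht : ‖t‖ = 1) (h : 1 ≤ ‖t - 1‖) :
    |arg (-t)| ≤ 2 * (π / 3) := by
  have hdist := norm_sub_sq_of_norm_eq_one ht norm_one
  simp only [one_re, one_im, mul_one, mul_zero, add_zero] at hdist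
  refine abs_arg_le_of_cos_le_re (by rw [norm_neg, ht]) (by positivity) ?_
  rw [Real.cos_two_mul, Real.cos_pi_div_three, neg_re]
  nlinarith

open scoped Pointwise in
/-- Negated, the five points other than `1` lie in the arc `|arg| ≤ 2π/3`. -/
lemma ζ_zpow_mem_of_card_eq_six (T : Finset ℂ) (hunit : ∀ t ∈ T, ‖t‖ = 1)
    (hsep : (T : Set ℂ).Pairwise fun s t => 1 ≤ ‖s - t‖) (hcard : T.card = 6) (h₁ : 1 ∈ T)
    (k : ℤ) : ζ ^ k ∈ T := by
  have hopp : ∀ j : ℤ, |j| ≤ 2 → ζ ^ (j + 3) ∈ T := by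
    intro j hj
    have hA := ζ_zpow_mem_of_separated (-T.erase 1) 2
      (fun z hz => by
        rw [Finset.mem_neg'] at hz
        rw [← norm_neg, hunit _ (Finset.mem_of_mem_erase hz)])
      (fun z hz w hw hzw => by
        rw [Finset.mem_coe, Finset.mem_neg'] at hz hw
        have : 1 ≤ ‖-z - -w‖ :=
          hsep (Finset.mem_of_mem_erase hz) (Finset.mem_of_mem_erase hw) (neg_inj.not.2 hzw)
        rwa [neg_sub_neg, norm_sub_rev] at this)
      (fun z hz => by
        obtain ⟨hne, hT⟩ := Finset.mem_erase.1 (Finset.mem_neg'.1 hz)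
        simpa using abs_arg_neg_le_of_one_le_norm_sub_one (hunit _ hT) (hsep hT h₁ hne))
      (by rw [Finset.card_neg, Finset.card_erase_of_mem h₁, hcard]) hj
    rw [ζ_zpow_add_three]
    exact Finset.mem_of_mem_erase (Finset.mem_neg'.1 hA)
  refine forall_ζ_zpow_of_Ico (p := (· ∈ T)) 0 (fun j hj₀ hj₆ => ?_) k
  rcases hj₀.eq_or_lt with rfl | hpos
  · simpa using h₁
  · simpa using hopp (j - 3) (abs_le.2 ⟨by omega, by omega⟩)

lemma ζ_zpow_two_add_ζ_zpow_three_add_ζ_zpow_neg_two :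
    ζ ^ (2 : ℤ) + ζ ^ (3 : ℤ) + ζ ^ (-2 : ℤ) = -2 := by
  have e₁ := ζ_zpow_sub_one_add_ζ_zpow_add_one 1
  have e₀ := ζ_zpow_sub_one_add_ζ_zpow_add_one 0
  have en₁ := ζ_zpow_sub_one_add_ζ_zpow_add_one (-1)
  have e₃ := ζ_zpow_add_three 0
  norm_num at e₁ e₀ en₁ e₃ ⊢
  linear_combination e₁ + en₁ + e₀ + e₃

lemma abs_arg_le_of_separated_from_ζ_zpow {s : ℂ} (hs : ‖s‖ = 1) (h₂ : 1 ≤ ‖s - ζ ^ (2 : ℤ)‖)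
    (h₃ : 1 ≤ ‖s - ζ ^ (3 : ℤ)‖) (hn₂ : 1 ≤ ‖s - ζ ^ (-2 : ℤ)‖) : |arg s| ≤ π / 3 := by
  have a₂ := pi_div_three_le_abs_arg_sub hs (norm_ζ_zpow 2) h₂
  have a₃ := pi_div_three_le_abs_arg_sub hs (norm_ζ_zpow 3) h₃
  have an₂ := pi_div_three_le_abs_arg_sub hs (norm_ζ_zpow (-2)) hn₂
  rw [arg_ζ_zpow (by norm_num) (by norm_num)] at a₂ a₃ an₂
  push_cast at a₂ a₃ an₂
  rw [le_abs'] at a₂ a₃ an₂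
  have := neg_pi_lt_arg s
  have := arg_le_pi s
  rw [abs_le]
  constructor
  · rcases an₂ with h | h <;> linarith
  · rcases a₃ with h | h <;> rcases a₂ with h' | h' <;> linarith

lemma ζ_zpow_mem_of_sum_eq_zero (T : Finset ℂ) (hunit : ∀ t ∈ T, ‖t‖ = 1)
    (hsep : (T : Set ℂ).Pairwise fun s t => 1 ≤ ‖s - t‖) (hsum : ∑ t ∈ T, t = 0)
    (h₂ : ζ ^ (2 : ℤ) ∈ T) (h₃ : ζ ^ (3 : ℤ) ∈ T) (hn₂ : ζ ^ (-2 : ℤ) ∈ T) (k : ℤ) :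
    ζ ^ k ∈ T := by
  set K : Finset ℂ := {ζ ^ (2 : ℤ), ζ ^ (3 : ℤ), ζ ^ (-2 : ℤ)}
  have hKT : K ⊆ T :=
    Finset.insert_subset h₂ (Finset.insert_subset h₃ (Finset.singleton_subset_iff.2 hn₂))
  have hsumK : ∑ t ∈ K, t = -2 := by
    rw [Finset.sum_insert, Finset.sum_pair, ← add_assoc,
      ζ_zpow_two_add_ζ_zpow_three_add_ζ_zpow_neg_two]
    · exact injOn_ζ_zpow.ne (by norm_num) (by norm_num) (by norm_num)
    · rw [Finset.mem_insert, Finset.mem_singleton, not_or]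
      exact ⟨injOn_ζ_zpow.ne (by norm_num) (by norm_num) (by norm_num),
        injOn_ζ_zpow.ne (by norm_num) (by norm_num) (by norm_num)⟩
  set S := T \ K
  have hS : ∀ s ∈ S, s ∈ T ∧ s ≠ ζ ^ (2 : ℤ) ∧ s ≠ ζ ^ (3 : ℤ) ∧ s ≠ ζ ^ (-2 : ℤ) := by
    intro s hs
    simpa [S, K, not_or] using hs
  have hSunit : ∀ s ∈ S, ‖s‖ = 1 := fun s hs => hunit s (hS s hs).1
  have hSarg : ∀ s ∈ S, |arg s| ≤ ((1 : ℕ) : ℝ) * (π / 3) := fun s hs => by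
    obtain ⟨hT, hne₂, hne₃, hne_n₂⟩ := hS s hs
    simpa using abs_arg_le_of_separated_from_ζ_zpow (hunit s hT) (hsep hT h₂ hne₂)
      (hsep hT h₃ hne₃) (hsep hT hn₂ hne_n₂)
  have hcard := three_le_card_of_sum_eq_two S hSunit
    (by rw [Finset.sum_sdiff_eq_sub hKT, hsum, hsumK]; ring)
  refine forall_ζ_zpow_of_Ico (p := (· ∈ T)) (-2) (fun j hj₁ hj₂ => ?_) k
  by_cases hj : |j| ≤ 1
  · exact Finset.sdiff_subset (ζ_zpow_mem_of_separated S 1 hSunit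
      (hsep.mono (Finset.coe_subset.2 Finset.sdiff_subset)) hSarg hcard (by exact_mod_cast hj))
  · rw [abs_le] at hj
    obtain rfl | rfl | rfl : j = -2 ∨ j = 2 ∨ j = 3 := by omega
    exacts [hn₂, h₂, h₃]

section Neighbours

variable {D : Set ℂ} (hsep : D.Pairwise fun z w => 1 ≤ dist z w)
include hsep

lemma exists_normalized {q w : ℂ} (hfin : {z ∈ D | dist z q = 1}.Finite) (hw : ‖w‖ = 1) :
    ∃ T : Finset ℂ, (∀ t, t ∈ T ↔ q + w * t ∈ D ∧ ‖t‖ = 1) ∧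
      (T : Set ℂ).Pairwise (fun s t => 1 ≤ ‖s - t‖) ∧
      (T : Set ℂ).encard = {z ∈ D | dist z q = 1}.encard ∧
      ∑ t ∈ T, t = w⁻¹ * ∑ᶠ z ∈ {z ∈ D | dist z q = 1}, (z - q) := by
  have hw₀ : w ≠ 0 := norm_ne_zero_iff.1 (by rw [hw]; exact one_ne_zero)
  set f : ℂ → ℂ := fun z => w⁻¹ * (z - q)
  have hnorm : ∀ z, ‖f z‖ = ‖z - q‖ := fun z => by simp [f, hw]
  have hinj : Function.Injective f := fun z z' h => by simpa [f, hw₀] using h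
  have hmem : ∀ t, t ∈ f '' {z ∈ D | dist z q = 1} ↔ q + w * t ∈ D ∧ ‖t‖ = 1 := by
    refine fun t => ⟨?_, fun ⟨ht, ht₁⟩ => ⟨q + w * t, ⟨ht, ?_⟩, by simp [f, hw₀]⟩⟩
    · rintro ⟨z, ⟨hz, hzq⟩, rfl⟩
      refine ⟨by convert hz using 1; simp [f, hw₀], by rwa [hnorm, ← dist_eq]⟩
    · rw [dist_eq, add_sub_cancel_left, norm_mul, hw, ht₁, one_mul]
  refine ⟨(hfin.image f).toFinset, fun t => by rw [Set.Finite.mem_toFinset, hmem], ?_, ?_, ?_⟩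
  · rw [Set.Finite.coe_toFinset]
    rintro _ ⟨z, hz, rfl⟩ _ ⟨z', hz', rfl⟩ hne
    have : 1 ≤ dist z z' := hsep hz.1 hz'.1 fun h => hne (h ▸ rfl)
    simpa [f, ← mul_sub, hw, dist_eq] using this
  · rw [Set.Finite.coe_toFinset, hinj.injOn.encard_image]
  · rw [← finsum_mem_coe_finset, Set.Finite.coe_toFinset, finsum_mem_image hinj.injOn,
      mul_finsum_mem]

lemma exists_add_mul_ζ_zpow_mem_of_encard_eq_six {q : ℂ}
    (h6 : {z ∈ D | dist z q = 1}.encard = 6) : ∃ u : ℂ, ‖u‖ = 1 ∧ ∀ k : ℤ, q + u * ζ ^ k ∈ D := by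
  obtain ⟨z₀, hz₀, hz₀q⟩ := Set.nonempty_of_encard_ne_zero (s := {z ∈ D | dist z q = 1})
    (by rw [h6]; norm_num)
  have hu : ‖z₀ - q‖ = 1 := by rwa [← dist_eq]
  obtain ⟨T, hmem, hTsep, hTcard, -⟩ :=
    exists_normalized hsep (Set.finite_of_encard_eq_coe h6) hu
  rw [h6, Set.encard_coe_eq_coe_finsetCard] at hTcard
  refine ⟨z₀ - q, hu, fun k => ((hmem _).1 ?_).1⟩
  exact ζ_zpow_mem_of_card_eq_six T (fun t ht => ((hmem t).1 ht).2) hTsep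
    (by exact_mod_cast hTcard) ((hmem 1).2 ⟨by rwa [mul_one, add_sub_cancel], norm_one⟩) k

lemma add_mul_ζ_zpow_mem_of_balanced {q w : ℂ}
    (hbal : {z ∈ D | dist z q = 1}.Finite ∧ ∑ᶠ z ∈ {z ∈ D | dist z q = 1}, (z - q) = 0)
    (hw : ‖w‖ = 1) (h₂ : q + w * ζ ^ (2 : ℤ) ∈ D) (h₃ : q + w * ζ ^ (3 : ℤ) ∈ D)
    (hn₂ : q + w * ζ ^ (-2 : ℤ) ∈ D) (k : ℤ) : q + w * ζ ^ k ∈ D := by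
  obtain ⟨T, hmem, hTsep, -, hTsum⟩ := exists_normalized hsep hbal.1 hw
  rw [hbal.2, mul_zero] at hTsum
  have hT : ∀ j : ℤ, ζ ^ j ∈ T ↔ q + w * ζ ^ j ∈ D := fun j => by
    rw [hmem, norm_ζ_zpow, and_iff_left rfl]
  exact (hT k).1 (ζ_zpow_mem_of_sum_eq_zero T (fun t ht => ((hmem t).1 ht).2) hTsep hTsum
    ((hT 2).2 h₂) ((hT 3).2 h₃) ((hT _).2 hn₂) k)

end Neighbours

lemma exists_norm_sub_lattice_lt_one (y : ℂ) : ∃ a b : ℤ, ‖y - (a + b * ζ)‖ < 1 := by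
  set t : ℝ := y.im / (√3 / 2)
  set s : ℝ := y.re - t / 2
  have hy : y = s + t * ζ := by
    apply Complex.ext
    · simp only [add_re, ofReal_re, mul_re, ofReal_im, ζ_re, ζ_im, s]
      ring
    · simp only [add_im, ofReal_im, mul_im, ofReal_re, ζ_re, ζ_im, t]
      field_simp
      ring
  refine ⟨round s, round t, ?_⟩
  set p : ℝ := s - round s
  set r : ℝ := t - round t
  have hp : |p| ≤ 1 / 2 := abs_sub_round s
  have hr : |r| ≤ 1 / 2 := abs_sub_round t
  have hdecomp : y - (↑(round s) + ↑(round t) * ζ) = p + r * ζ := by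
    simp only [hy, p, r]; push_cast; ring
  have hnormSq : normSq (p + r * ζ) = p ^ 2 + p * r + r ^ 2 := by
    simp only [normSq_apply, add_re, add_im, mul_re, mul_im, ofReal_re, ofReal_im, ζ_re, ζ_im]
    nlinarith [Real.sq_sqrt (show (0 : ℝ) ≤ 3 by norm_num)]
  rw [hdecomp, ← sq_lt_one_iff₀ (norm_nonneg _), Complex.sq_norm, hnormSq]
  rw [abs_le] at hp hr
  nlinarith [mul_nonneg (sub_nonneg.2 hp.2) (sub_nonneg.2 hr.2),
    mul_nonneg (sub_nonneg.2 hp.2) (neg_le_iff_add_nonneg.1 hr.1)]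

section Propagation

variable {D : Set ℂ} {u : ℂ}

def IsHexCenter (D : Set ℂ) (u z : ℂ) : Prop := z ∈ D ∧ ∀ k : ℤ, z + u * ζ ^ k ∈ D

variable (hsep : D.Pairwise fun z w => 1 ≤ dist z w)
  (hbal : ∀ q ∈ D, {z ∈ D | dist z q = 1}.Finite ∧ ∑ᶠ z ∈ {z ∈ D | dist z q = 1}, (z - q) = 0)
  (hu : ‖u‖ = 1)
include hsep hbal hu

lemma IsHexCenter.add_mul_ζ_zpow {z : ℂ} (hz : IsHexCenter D u z) (k : ℤ) :
    IsHexCenter D u (z + u * ζ ^ k) := by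
  set q := z + u * ζ ^ k
  have hq : q ∈ D := hz.2 k
  have hstep : ∀ j : ℤ, q + u * ζ ^ k * ζ ^ j = z + u * (ζ ^ k + ζ ^ (k + j)) := fun j => by
    rw [zpow_add₀ ζ_ne_zero]; ring
  have hforce := add_mul_ζ_zpow_mem_of_balanced hsep (hbal q hq) (w := u * ζ ^ k)
    (by rw [norm_mul, hu, norm_ζ_zpow, one_mul]) ?_ ?_ ?_
  · refine ⟨hq, fun m => ?_⟩
    have := hforce (m - k)
    rwa [mul_assoc, ← zpow_add₀ ζ_ne_zero, add_sub_cancel] at this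
  · have h := ζ_zpow_sub_one_add_ζ_zpow_add_one (k + 1)
    rw [add_sub_cancel_right, add_assoc, one_add_one_eq_two] at h
    rw [hstep, h]
    exact hz.2 (k + 1)
  · rw [hstep, ζ_zpow_add_three, add_neg_cancel, mul_zero, add_zero]
    exact hz.1
  · have h := ζ_zpow_sub_one_add_ζ_zpow_add_one (k - 1)
    rw [sub_add_cancel, sub_sub, one_add_one_eq_two, add_comm] at h
    rw [hstep, ← sub_eq_add_neg, h]
    exact hz.2 (k - 1)

lemma IsHexCenter.add_int_mul {z : ℂ} (hz : IsHexCenter D u z) (k n : ℤ) :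
    IsHexCenter D u (z + n * (u * ζ ^ k)) := by
  induction n using Int.induction_on with
  | zero => simpa using hz
  | succ n ih =>
    convert ih.add_mul_ζ_zpow hsep hbal hu k using 1
    push_cast
    ring
  | pred n ih =>
    convert ih.add_mul_ζ_zpow hsep hbal hu (k + 3) using 1
    rw [ζ_zpow_add_three]
    push_cast
    ring

lemma IsHexCenter.add_lattice {z : ℂ} (hz : IsHexCenter D u z) (a b : ℤ) :
    IsHexCenter D u (z + a * u + b * (u * ζ)) := by
  convert (hz.add_int_mul hsep hbal hu 0 a).add_int_mul hsep hbal hu 1 b using 1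
  simp

end Propagation

theorem eq_lattice_of_balanced (D : Set ℂ) (hsep : D.Pairwise fun z w => 1 ≤ dist z w)
    (hbal : ∀ q ∈ D, {z ∈ D | dist z q = 1}.Finite ∧ ∑ᶠ z ∈ {z ∈ D | dist z q = 1}, (z - q) = 0)
    {p : ℂ} (hp : p ∈ D) (h6 : {z ∈ D | dist z p = 1}.encard = 6) :
    ∃ u : ℂ, ‖u‖ = 1 ∧ D = {z | ∃ a b : ℤ, z = p + a * u + b * (u * ζ)} := by
  obtain ⟨u, hu, hhex⟩ := exists_add_mul_ζ_zpow_mem_of_encard_eq_six hsep h6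
  have hlattice := (show IsHexCenter D u p from ⟨hp, hhex⟩).add_lattice hsep hbal hu
  refine ⟨u, hu, Set.Subset.antisymm (fun x hx => ?_) fun _ ⟨a, b, hx⟩ => hx ▸ (hlattice a b).1⟩
  obtain ⟨a, b, hab⟩ := exists_norm_sub_lattice_lt_one ((x - p) / u)
  refine ⟨a, b, by_contra fun hne => (hsep hx (hlattice a b).1 hne).not_gt ?_⟩
  have hu₀ : u ≠ 0 := norm_ne_zero_iff.1 (by rw [hu]; exact one_ne_zero)
  calc dist x (p + a * u + b * (u * ζ)) = ‖u * ((x - p) / u - (a + b * ζ))‖ := by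
        rw [dist_eq]; congr 1; field_simp; ring
    _ < 1 := by rwa [norm_mul, hu, one_mul]

end TriangularLattice

open TriangularLattice

lemma LinearIsometryEquiv.image_nbrs (e : E2 ≃ₗᵢ[ℝ] ℂ) (C : Set E2) (P : E2) :
    e '' nbrs C P = {z ∈ e '' C | dist z (e P) = 1} := by
  ext z
  constructor
  · rintro ⟨x, ⟨hx, hd⟩, rfl⟩
    exact ⟨⟨x, hx, rfl⟩, by rwa [e.dist_map]⟩
  · rintro ⟨⟨x, hx, rfl⟩, hd⟩
    exact ⟨x, ⟨hx, by rwa [e.dist_map] at hd⟩, rfl⟩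

lemma IsBalanced.image_finite_and_finsum_eq_zero {C : Set E2} (hbal : IsBalanced C)
    (e : E2 ≃ₗᵢ[ℝ] ℂ) :
    ∀ q ∈ e '' C, {z ∈ e '' C | dist z q = 1}.Finite ∧
      ∑ᶠ z ∈ {z ∈ e '' C | dist z q = 1}, (z - q) = 0 := by
  rintro _ ⟨Q, hQ, rfl⟩
  obtain ⟨hfin, hsum⟩ := hbal Q hQ 1 one_pos
  rw [← e.image_nbrs]
  refine ⟨hfin.image e, ?_⟩
  rw [finsum_mem_image e.injective.injOn]
  simp_rw [← map_sub]
  rw [← map_zero e, ← hsum]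
  exact (e.toLinearEquiv.toAddEquiv.map_finsum_mem _ hfin).symm

/-- If some point of a balanced configuration with minimal distance 1 has exactly 6
neighbors, then the configuration is a triangular lattice: there are unit vectors `u, v`
with `⟪u,v⟫ = 1/2` such that `C = {P + a·u + b·v : a, b ∈ ℤ}`. -/
theorem six_neighbors_triangular_lattice (C : Set E2)
    (hbal : IsBalanced C) (hmin : MinDistOne C)
    (P : E2) (hP : P ∈ C) (h6 : (nbrs C P).encard = 6) :
    ∃ u v : E2, ‖u‖ = 1 ∧ ‖v‖ = 1 ∧ ⟪u, v⟫ = 1 / 2 ∧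
      C = {x | ∃ a b : ℤ, x = P + (a : ℝ) • u + (b : ℝ) • v} := by
  let e : E2 ≃ₗᵢ[ℝ] ℂ := Complex.orthonormalBasisOneI.repr.symm
  obtain ⟨u, hu, hD⟩ := eq_lattice_of_balanced (e '' C)
    ((e.injective.injOn.pairwise_image).2 fun x hx y hy hxy => by
      simpa only [Function.onFun, e.dist_map] using hmin.1 x hx y hy hxy)
    (hbal.image_finite_and_finsum_eq_zero e) (Set.mem_image_of_mem e hP)
    (by rw [← e.image_nbrs, e.injective.encard_image, h6])
  refine ⟨e.symm u, e.symm (u * ζ), by simpa using hu, by simp [hu, norm_ζ], ?_, ?_⟩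
  · rw [e.symm.inner_map_map, Complex.inner, mul_right_comm, Complex.mul_conj,
      Complex.normSq_eq_norm_sq, hu]
    simp [ζ_re]
  · ext x
    rw [← e.injective.mem_set_image, hD]
    refine exists₂_congr fun a b => ?_
    rw [← e.injective.eq_iff]
    simp [Complex.real_smul]
end
end

section
/- Let C ⊆ ℝ² be a balanced configuration with minimal distance 1, and let P, Q ∈ C with dist(P,Q) = 1. Then it is not the case that both P and Q have exactly 5 neighbors. -/
/-!
Put `P` at `0` and `Q` at `1` in `ℂ`. The unit vectors from a point to its neighbours sum to zero
and are pairwise at angular distance at least `π / 3`, so, measured from the edge `PQ`, the other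
four neighbours of `P` sit at angles `π / 3 ≤ t₁ < t₂ < t₃ < t₄ ≤ 5π / 3` with gaps at least
`π / 3`, and similarly for `Q`. For five such vectors the balance forces the two gaps next to the
edge, `t₁` and `2π - t₄`, to sum to less than `π`; if one of them is `π / 3` the other is less
than `π / 2`; and they are not both `π / 3`. On each side of the edge, the first neighbour of `P`
and the first neighbour of `Q` either coincide (an equilateral triangle, both gaps `π / 3`) or are
at distance at least `1`, which requires their two gaps to sum to at least `π`. The two sides of
the edge together contradict the three facts above.
-/

open EuclideanGeometry RealInnerProductSpace

noncomputable section

open Real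

theorem norm_exp_mul_I_sub_exp_mul_I_sq (s t : ℝ) :
    ‖Complex.exp (s * Complex.I) - Complex.exp (t * Complex.I)‖ ^ 2 = 2 - 2 * cos (s - t) := by
  rw [← Complex.normSq_eq_norm_sq, Complex.normSq_apply]
  simp only [Complex.sub_re, Complex.sub_im, Complex.exp_ofReal_mul_I_re,
    Complex.exp_ofReal_mul_I_im, cos_sub]
  linear_combination sin_sq_add_cos_sq s + sin_sq_add_cos_sq t

theorem norm_exp_mul_I_add_exp_mul_I_sub_one_sq (a b : ℝ) :
    ‖Complex.exp (a * Complex.I) + Complex.exp (b * Complex.I) - 1‖ ^ 2 =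
      1 + 8 * sin (a / 2) * sin (b / 2) * cos ((a - b) / 2) := by
  obtain ⟨x, rfl⟩ : ∃ x, a = 2 * x := ⟨a / 2, by ring⟩
  obtain ⟨y, rfl⟩ : ∃ y, b = 2 * y := ⟨b / 2, by ring⟩
  rw [← Complex.normSq_eq_norm_sq, Complex.normSq_apply]
  simp only [Complex.sub_re, Complex.sub_im, Complex.add_re, Complex.add_im,
    Complex.exp_ofReal_mul_I_re, Complex.exp_ofReal_mul_I_im, Complex.one_re, Complex.one_im,
    cos_two_mul, sin_two_mul, show ∀ z : ℝ, 2 * z / 2 = z from fun z => by ring,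
    show 2 * x - 2 * y = 2 * (x - y) by ring, cos_sub]
  linear_combination (4 * cos x ^ 2 - 8 * sin y ^ 2) * sin_sq_add_cos_sq x +
    (4 * cos y ^ 2 - 8 + 8 * cos x ^ 2) * sin_sq_add_cos_sq y

theorem pi_div_three_le_abs_sub {s t : ℝ}
    (h : 1 ≤ ‖Complex.exp (s * Complex.I) - Complex.exp (t * Complex.I)‖) : π / 3 ≤ |s - t| := by
  by_contra! hlt
  have hcos : cos (π / 3) < cos |s - t| :=
    cos_lt_cos_of_nonneg_of_le_pi (abs_nonneg _) (by linarith [pi_pos]) hlt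
  rw [cos_abs, cos_pi_div_three] at hcos
  nlinarith [norm_exp_mul_I_sub_exp_mul_I_sq s t]

theorem norm_exp_mul_I_add_exp_mul_I_sub_one_lt_one {a b : ℝ} (ha : 0 < a) (hb : b < 2 * π)
    (hab : a + π < b) :
    ‖Complex.exp (a * Complex.I) + Complex.exp (b * Complex.I) - 1‖ < 1 := by
  have ha' : 0 < sin (a / 2) := sin_pos_of_pos_of_lt_pi (by linarith) (by linarith)
  have hb' : 0 < sin (b / 2) := sin_pos_of_pos_of_lt_pi (by linarith) (by linarith)
  have hab' : cos ((a - b) / 2) < 0 := by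
    rw [← cos_neg]
    exact cos_neg_of_pi_div_two_lt_of_lt (by linarith) (by linarith)
  have hsq := norm_exp_mul_I_add_exp_mul_I_sub_one_sq a b
  have : 0 < sin (a / 2) * sin (b / 2) := mul_pos ha' hb'
  nlinarith [norm_nonneg (Complex.exp (a * Complex.I) + Complex.exp (b * Complex.I) - 1)]

theorem eq_of_exp_mul_I_add_exp_mul_I_eq_one {a b : ℝ} (ha : a ∈ Set.Icc 0 π)
    (hb : b ∈ Set.Icc π (2 * π))
    (h : Complex.exp (a * Complex.I) + Complex.exp (b * Complex.I) = 1) :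
    a = π / 3 ∧ b = 5 * π / 3 := by
  have hcos : ∀ {s t : ℝ}, Complex.exp (s * Complex.I) + Complex.exp (t * Complex.I) = 1 →
      cos s = 1 / 2 := by
    intro s t hst
    have := norm_exp_mul_I_sub_exp_mul_I_sq s 0
    rw [Complex.ofReal_zero, zero_mul, Complex.exp_zero, ← hst, sub_add_cancel_left, norm_neg,
      Complex.norm_exp_ofReal_mul_I, sub_zero] at this
    linarith
  have hca := hcos h
  have hcb := hcos ((add_comm _ _).trans h)
  constructor
  · exact injOn_cos ha ⟨by linarith [pi_pos], by linarith [pi_pos]⟩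
      (by rw [hca, cos_pi_div_three])
  · have : 2 * π - b = π / 3 := injOn_cos ⟨by linarith [hb.2], by linarith [hb.1]⟩
      ⟨by linarith [pi_pos], by linarith [pi_pos]⟩ (by rw [cos_two_pi_sub, hcb, cos_pi_div_three])
    linarith

def argIco (z : ℂ) : ℝ := toIcoMod two_pi_pos 0 (Complex.arg z)

theorem argIco_mem_Ico (z : ℂ) : argIco z ∈ Set.Ico 0 (2 * π) :=
  toIcoMod_mem_Ico' two_pi_pos _

theorem argIco_one : argIco 1 = 0 := by
  rw [argIco, Complex.arg_one, toIcoMod_apply_left]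

theorem exp_argIco_mul_I {z : ℂ} (hz : ‖z‖ = 1) : Complex.exp (argIco z * Complex.I) = z := by
  rw [argIco, ← self_sub_toIcoDiv_zsmul, Complex.ofReal_sub, Complex.ofReal_zsmul,
    Complex.ofReal_mul, Complex.ofReal_ofNat, Complex.exp_mul_I_periodic.sub_zsmul_eq]
  simpa [hz] using Complex.norm_mul_exp_arg_mul_I z

/-- The angles, measured counterclockwise from the direction of one neighbour, of the other four
neighbours of a point with exactly five neighbours. -/
structure FiveNeighborAngles (t₁ t₂ t₃ t₄ : ℝ) : Prop where
  pi_div_three_le : π / 3 ≤ t₁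
  gap₁₂ : t₁ + π / 3 ≤ t₂
  gap₂₃ : t₂ + π / 3 ≤ t₃
  gap₃₄ : t₃ + π / 3 ≤ t₄
  le_five_pi_div_three : t₄ ≤ 5 * π / 3
  sum_cos : 1 + cos t₁ + cos t₂ + cos t₃ + cos t₄ = 0
  sum_sin : sin t₁ + sin t₂ + sin t₃ + sin t₄ = 0

namespace FiveNeighborAngles

variable {t₁ t₂ t₃ t₄ : ℝ}

theorem reflect (h : FiveNeighborAngles t₁ t₂ t₃ t₄) :
    FiveNeighborAngles (2 * π - t₄) (2 * π - t₃) (2 * π - t₂) (2 * π - t₁) where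
  pi_div_three_le := by linarith [h.le_five_pi_div_three]
  gap₁₂ := by linarith [h.gap₃₄]
  gap₂₃ := by linarith [h.gap₂₃]
  gap₃₄ := by linarith [h.gap₁₂]
  le_five_pi_div_three := by linarith [h.pi_div_three_le]
  sum_cos := by simp only [cos_two_pi_sub]; linarith [h.sum_cos]
  sum_sin := by simp only [sin_two_pi_sub]; linarith [h.sum_sin]

theorem le_two_pi_div_three (h : FiveNeighborAngles t₁ t₂ t₃ t₄) : t₁ ≤ 2 * π / 3 := by
  linarith [h.gap₁₂, h.gap₂₃, h.gap₃₄, h.le_five_pi_div_three]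

theorem four_pi_div_three_le (h : FiveNeighborAngles t₁ t₂ t₃ t₄) : 4 * π / 3 ≤ t₄ := by
  linarith [h.gap₁₂, h.gap₂₃, h.gap₃₄, h.pi_div_three_le]

theorem add_two_pi_sub_lt_pi (h : FiveNeighborAngles t₁ t₂ t₃ t₄) : t₁ + (2 * π - t₄) < π := by
  by_contra! hge
  -- otherwise the three inner gaps are `π / 3` and the balance reads `1 + i√3 e^{it₁} = 0`
  obtain rfl : t₂ = t₁ + π / 3 := by linarith [h.gap₁₂, h.gap₂₃, h.gap₃₄]
  obtain rfl : t₃ = t₁ + (π - π / 3) := by linarith [h.gap₂₃, h.gap₃₄]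
  obtain rfl : t₄ = t₁ + π := by linarith [h.gap₃₄]
  have hc := h.sum_cos
  have hs := h.sum_sin
  simp only [cos_add, sin_add, cos_pi_sub, sin_pi_sub, cos_pi, sin_pi, cos_pi_div_three,
    sin_pi_div_three] at hc hs
  have hcos : √3 * cos t₁ = 0 := by linarith
  have hsin : √3 * sin t₁ = 1 := by linarith
  have h3 : √3 ^ 2 = 3 := sq_sqrt (by norm_num)
  nlinarith [sin_sq_add_cos_sq t₁]

theorem not_eq_and_eq (h : FiveNeighborAngles t₁ t₂ t₃ t₄) :
    ¬(t₁ = π / 3 ∧ t₄ = 5 * π / 3) := by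
  rintro ⟨rfl, rfl⟩
  -- `1 + e^{iπ/3} + e^{-iπ/3} = 2`, so both middle vectors would be `-1`
  have hc := h.sum_cos
  rw [cos_pi_div_three, show 5 * π / 3 = 2 * π - π / 3 by ring, cos_two_pi_sub,
    cos_pi_div_three] at hc
  have h₂ : cos t₂ = -1 := by linarith [neg_one_le_cos t₂, neg_one_le_cos t₃]
  have h₃ : cos t₃ = -1 := by linarith [neg_one_le_cos t₂, neg_one_le_cos t₃]
  obtain rfl : t₂ = π :=
    injOn_cos ⟨by linarith [h.gap₁₂, pi_pos], by linarith [h.gap₂₃, h.gap₃₄]⟩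
      ⟨pi_pos.le, le_rfl⟩ (h₂.trans cos_pi.symm)
  obtain rfl : t₃ = π + π / 3 := by linarith [h.gap₂₃, h.gap₃₄]
  rw [cos_add, cos_pi, sin_pi, cos_pi_div_three] at h₃
  norm_num at h₃

theorem two_pi_sub_lt_pi_div_two_of_eq (h : FiveNeighborAngles t₁ t₂ t₃ t₄) (h₁ : t₁ = π / 3) :
    2 * π - t₄ < π / 2 := by
  by_contra! h₄
  obtain ⟨-, g₁₂, g₂₃, g₃₄, -, hc, hs⟩ := h
  subst h₁
  have hπ := pi_pos
  have cos₂ : cos (2 * π / 3) = -(1 / 2) := by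
    rw [show 2 * π / 3 = π - π / 3 by ring, cos_pi_sub, cos_pi_div_three]
  have cos₅ : cos (5 * π / 6) = -(√3 / 2) := by
    rw [show 5 * π / 6 = π - π / 6 by ring, cos_pi_sub, cos_pi_div_six]
  have sin₅ : sin (5 * π / 6) = 1 / 2 := by
    rw [show 5 * π / 6 = π - π / 6 by ring, sin_pi_sub, sin_pi_div_six]
  -- Projected onto the direction `5π/6`, the balance says that three cosines, bounded below by
  -- `√3/2`, `1/2` and `-1/2`, sum to `√3/2`: all three bounds are attained.
  have key : cos (5 * π / 6 - t₂) + cos (t₃ - 5 * π / 6) + cos (t₄ - 5 * π / 6) = √3 / 2 := by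
    rw [cos_pi_div_three] at hc
    rw [sin_pi_div_three] at hs
    simp only [cos_sub, cos₅, sin₅]
    linear_combination (-(√3 / 2)) * hc + (1 / 2) * hs
  have i₂ : cos (π / 6) ≤ cos (5 * π / 6 - t₂) :=
    cos_le_cos_of_nonneg_of_le_pi (by linarith) (by linarith) (by linarith)
  have i₃ : cos (π / 3) ≤ cos (t₃ - 5 * π / 6) :=
    cos_le_cos_of_nonneg_of_le_pi (by linarith) (by linarith) (by linarith)
  have i₄ : cos (2 * π / 3) ≤ cos (t₄ - 5 * π / 6) :=
    cos_le_cos_of_nonneg_of_le_pi (by linarith) (by linarith) (by linarith)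
  rw [cos_pi_div_six] at i₂
  rw [cos_pi_div_three] at i₃
  rw [cos₂] at i₄
  obtain rfl : t₂ = π - π / 3 := by
    have : 5 * π / 6 - t₂ = π / 6 := injOn_cos ⟨by linarith, by linarith⟩
      ⟨by linarith, by linarith⟩ (by rw [cos_pi_div_six]; linarith)
    linarith
  obtain rfl : t₃ = π + π / 6 := by
    have : t₃ - 5 * π / 6 = π / 3 := injOn_cos ⟨by linarith, by linarith⟩
      ⟨by linarith, by linarith⟩ (by rw [cos_pi_div_three]; linarith)
    linarith
  obtain rfl : t₄ = π + π / 2 := by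
    have : t₄ - 5 * π / 6 = 2 * π / 3 := injOn_cos ⟨by linarith, by linarith⟩
      ⟨by linarith, by linarith⟩ (by rw [cos₂]; linarith)
    linarith
  simp only [cos_pi_div_three, cos_pi_sub, cos_add, cos_pi, sin_pi, cos_pi_div_six,
    cos_pi_div_two] at hc
  nlinarith [sq_sqrt (show (0 : ℝ) ≤ 3 by norm_num)]

theorem lt_pi_div_two_of_eq (h : FiveNeighborAngles t₁ t₂ t₃ t₄) (h₄ : t₄ = 5 * π / 3) :
    t₁ < π / 2 := by
  have := h.reflect.two_pi_sub_lt_pi_div_two_of_eq (by rw [h₄]; ring)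
  linarith

theorem first_mem_Ioc (h : FiveNeighborAngles t₁ t₂ t₃ t₄) : t₁ ∈ Set.Ioc 0 π :=
  ⟨by linarith [h.pi_div_three_le, pi_pos], by linarith [h.le_two_pi_div_three, pi_pos]⟩

theorem last_mem_Ico (h : FiveNeighborAngles t₁ t₂ t₃ t₄) : t₄ ∈ Set.Ico π (2 * π) :=
  ⟨by linarith [h.four_pi_div_three_le, pi_pos], by linarith [h.le_five_pi_div_three, pi_pos]⟩

theorem false_of_outer_gaps {r₁ r₂ r₃ r₄ : ℝ} (ht : FiveNeighborAngles t₁ t₂ t₃ t₄)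
    (hr : FiveNeighborAngles r₁ r₂ r₃ r₄)
    (htop : π ≤ t₁ + (2 * π - r₄) ∨ t₁ = π / 3 ∧ r₄ = 5 * π / 3)
    (hbot : π ≤ r₁ + (2 * π - t₄) ∨ r₁ = π / 3 ∧ t₄ = 5 * π / 3) : False := by
  rcases htop with htop | ⟨ht₁, hr₄⟩ <;> rcases hbot with hbot | ⟨hr₁, ht₄⟩
  · linarith [ht.add_two_pi_sub_lt_pi, hr.add_two_pi_sub_lt_pi]
  · linarith [ht.lt_pi_div_two_of_eq ht₄, hr.two_pi_sub_lt_pi_div_two_of_eq hr₁]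
  · linarith [ht.two_pi_sub_lt_pi_div_two_of_eq ht₁, hr.lt_pi_div_two_of_eq hr₄]
  · exact ht.not_eq_and_eq ⟨ht₁, ht₄⟩

end FiveNeighborAngles

theorem exists_fiveNeighborAngles_of_finset {T : Finset ℝ} (hcard : T.card = 5) (h₀ : 0 ∈ T)
    (hT : ∀ t ∈ T, t ∈ Set.Ico 0 (2 * π))
    (hsep : (T : Set ℝ).Pairwise fun s t =>
      1 ≤ ‖Complex.exp (s * Complex.I) - Complex.exp (t * Complex.I)‖)
    (hsum : ∑ t ∈ T, Complex.exp (t * Complex.I) = 0) :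
    ∃ t₁ t₂ t₃ t₄, FiveNeighborAngles t₁ t₂ t₃ t₄ ∧ t₁ ∈ T ∧ t₄ ∈ T := by
  rw [← T.map_orderEmbOfFin_univ hcard, Finset.sum_map, Fin.sum_univ_five] at hsum
  set f := T.orderEmbOfFin hcard
  have hf : ∀ i, f i ∈ T := T.orderEmbOfFin_mem hcard
  have hf₀ : f 0 = 0 :=
    le_antisymm ((Finset.orderEmbOfFin_zero hcard (by norm_num)).le.trans (T.min'_le 0 h₀))
      (hT _ (hf 0)).1
  have gap : ∀ i j : Fin 5, i < j → f i + π / 3 ≤ f j := by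
    intro i j hij
    have hlt : f i < f j := f.strictMono hij
    have := pi_div_three_le_abs_sub (hsep (hf j) (hf i) hlt.ne')
    rw [abs_of_pos (sub_pos.2 hlt)] at this
    linarith
  -- the neighbour at angle `0` also sits at angle `2π`
  have hlast : f 4 ≤ 5 * π / 3 := by
    have h₄ : 1 ≤ ‖Complex.exp (f 4 * Complex.I) - Complex.exp ((2 * π : ℝ) * Complex.I)‖ := by
      have := hsep (hf 4) (hf 0) (f.injective.ne (by decide))
      rwa [hf₀, Complex.ofReal_zero, zero_mul, Complex.exp_zero, ← Complex.exp_two_pi_mul_I,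
        ← Complex.ofReal_ofNat, ← Complex.ofReal_mul] at this
    have := pi_div_three_le_abs_sub h₄
    rw [abs_of_neg (by linarith [(hT _ (hf 4)).2])] at this
    linarith
  refine ⟨f 1, f 2, f 3, f 4, ⟨?_, gap 1 2 (by decide), gap 2 3 (by decide), gap 3 4 (by decide),
    hlast, ?_, ?_⟩, hf 1, hf 4⟩
  · simpa [hf₀] using gap 0 1 (by decide)
  · simpa [hf₀, Complex.exp_ofReal_mul_I_re] using congrArg Complex.re hsum
  · simpa [hf₀, Complex.exp_ofReal_mul_I_im] using congrArg Complex.im hsum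

theorem pi_le_add_two_pi_sub_or_eq {a b : ℝ} (ha : a ∈ Set.Ioc 0 π) (hb : b ∈ Set.Ico π (2 * π))
    (h : Complex.exp (a * Complex.I) + Complex.exp (b * Complex.I) - 1 = 0 ∨
      1 ≤ ‖Complex.exp (a * Complex.I) + Complex.exp (b * Complex.I) - 1‖) :
    π ≤ a + (2 * π - b) ∨ a = π / 3 ∧ b = 5 * π / 3 := by
  rcases h with h | h
  · exact Or.inr (eq_of_exp_mul_I_add_exp_mul_I_eq_one (Set.Ioc_subset_Icc_self ha)
      (Set.Ico_subset_Icc_self hb) (sub_eq_zero.1 h))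
  · exact Or.inl (le_of_not_gt fun hlt =>
      (norm_exp_mul_I_add_exp_mul_I_sub_one_lt_one ha.1 hb.2 (by linarith)).not_ge h)

theorem exists_linearIsometry_apply_eq_one {v : E2} (hv : ‖v‖ = 1) :
    ∃ L : E2 →ₗᵢ[ℝ] ℂ, L v = 1 := by
  set φ := Complex.orthonormalBasisOneI.repr.symm
  have hφ : ‖φ v‖ = 1 := by rw [φ.norm_map, hv]
  let c : Circle := ⟨starRingEnd ℂ (φ v), by simp [Submonoid.unitSphere, hφ]⟩
  refine ⟨(rotation c).toLinearIsometry.comp φ.toLinearIsometry, ?_⟩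
  change starRingEnd ℂ (φ v) * φ v = 1
  rw [Complex.conj_mul', hφ]
  norm_num

theorem add_sub_one_eq_zero_or_one_le_norm {C : Set E2} (L : E2 →ₗᵢ[ℝ] ℂ)
    (hC : C.Pairwise fun x y => 1 ≤ dist x y) {P Q A B : E2} {u v : ℂ} (hA : A ∈ C) (hB : B ∈ C)
    (hPQ : L (Q - P) = 1) (hu : L (A - P) = u) (hv : -L (B - Q) = v) :
    u + v - 1 = 0 ∨ 1 ≤ ‖u + v - 1‖ := by
  have hAB : L (A - B) = u + v - 1 := by
    rw [← hu, ← hv, ← hPQ, show A - B = (A - P) - (B - Q) - (Q - P) by abel, map_sub, map_sub]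
    ring
  rw [← hAB]
  rcases eq_or_ne A B with rfl | hne
  · simp
  · rw [L.norm_map, ← dist_eq_norm]
    exact Or.inr (hC hA hB hne)

theorem exists_fiveNeighborAngles {C : Set E2} {R S : E2} (L : E2 →ₗᵢ[ℝ] ℂ)
    (hC : C.Pairwise fun x y => 1 ≤ dist x y) (hfin : (nbrs C R).Finite)
    (hsum : ∑ᶠ x ∈ nbrs C R, (x - R) = 0) (h5 : (nbrs C R).encard = 5)
    (hS : S ∈ nbrs C R) (hLS : L (S - R) = 1) :
    ∃ t₁ t₂ t₃ t₄, FiveNeighborAngles t₁ t₂ t₃ t₄ ∧ ∃ A ∈ C, ∃ B ∈ C,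
      L (A - R) = Complex.exp (t₁ * Complex.I) ∧ L (B - R) = Complex.exp (t₄ * Complex.I) := by
  classical
  set s := hfin.toFinset
  set θ : E2 → ℝ := fun x => argIco (L (x - R))
  have hexp : ∀ x ∈ s, Complex.exp (θ x * Complex.I) = L (x - R) := fun x hx => by
    refine exp_argIco_mul_I ?_
    rw [L.norm_map, ← dist_eq_norm]
    exact ((hfin.mem_toFinset).1 hx).2
  have hinj : Set.InjOn θ s := fun x hx y hy hxy => by
    have := (hexp x hx).symm.trans
      ((congrArg (fun t : ℝ => Complex.exp (t * Complex.I)) hxy).trans (hexp y hy))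
    simpa using L.injective this
  have hmem : ∀ x ∈ s, x ∈ C := fun x hx => ((hfin.mem_toFinset).1 hx).1
  have hcard : (s.image θ).card = 5 := by
    rw [Finset.card_image_of_injOn hinj]
    exact_mod_cast hfin.encard_eq_coe_toFinset_card.symm.trans h5
  have h₀ : 0 ∈ s.image θ :=
    Finset.mem_image.2 ⟨S, hfin.mem_toFinset.2 hS, by simp only [θ, hLS, argIco_one]⟩
  have hsep : (s.image θ : Set ℝ).Pairwise fun t t' =>
      1 ≤ ‖Complex.exp (t * Complex.I) - Complex.exp (t' * Complex.I)‖ := by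
    rintro _ htx _ hty hxy
    obtain ⟨x, hx, rfl⟩ := Finset.mem_image.1 htx
    obtain ⟨y, hy, rfl⟩ := Finset.mem_image.1 hty
    rw [hexp x hx, hexp y hy, ← map_sub, sub_sub_sub_cancel_right, L.norm_map, ← dist_eq_norm]
    exact hC (hmem x hx) (hmem y hy) (ne_of_apply_ne θ hxy)
  have hsum' : ∑ t ∈ s.image θ, Complex.exp (t * Complex.I) = 0 := by
    rw [Finset.sum_image hinj, Finset.sum_congr rfl hexp, ← map_sum,
      ← finsum_mem_eq_finite_toFinset_sum _ hfin, hsum, map_zero]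
  obtain ⟨t₁, t₂, t₃, t₄, ht, h₁, h₄⟩ := exists_fiveNeighborAngles_of_finset hcard h₀
    (fun t ht => by obtain ⟨x, -, rfl⟩ := Finset.mem_image.1 ht; exact argIco_mem_Ico _) hsep hsum'
  obtain ⟨A, hA, rfl⟩ := Finset.mem_image.1 h₁
  obtain ⟨B, hB, rfl⟩ := Finset.mem_image.1 h₄
  exact ⟨_, _, _, _, ht, A, hmem A hA, B, hmem B hB, (hexp A hA).symm, (hexp B hB).symm⟩

/-- In a balanced configuration with minimal distance 1, two points at distance 1 cannot
both have exactly 5 neighbors. -/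
theorem no_adjacent_five_five (C : Set E2)
    (hbal : IsBalanced C) (hmin : MinDistOne C)
    (P Q : E2) (hP : P ∈ C) (hQ : Q ∈ C) (hPQ : dist P Q = 1) :
    ¬((nbrs C P).encard = 5 ∧ (nbrs C Q).encard = 5) := by
  rintro ⟨h5P, h5Q⟩
  obtain ⟨L, hL⟩ := exists_linearIsometry_apply_eq_one (v := Q - P)
    (by rw [← dist_eq_norm, dist_comm, hPQ])
  set L' := (LinearIsometryEquiv.neg ℝ).toLinearIsometry.comp L
  have hL' : L' (P - Q) = 1 := by simp [L', ← hL]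
  obtain ⟨hfinP, hsumP⟩ := hbal P hP 1 one_pos
  obtain ⟨hfinQ, hsumQ⟩ := hbal Q hQ 1 one_pos
  obtain ⟨t₁, t₂, t₃, t₄, ht, A, hA, B, hB, hAt, hBt⟩ :=
    exists_fiveNeighborAngles L hmin.1 hfinP hsumP h5P ⟨hQ, by rwa [dist_comm]⟩ hL
  obtain ⟨r₁, r₂, r₃, r₄, hr, A', hA', B', hB', hA'r, hB'r⟩ :=
    exists_fiveNeighborAngles L' hmin.1 hfinQ hsumQ h5Q ⟨hP, hPQ⟩ hL'
  refine ht.false_of_outer_gaps hr ?_ ?_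
  · refine pi_le_add_two_pi_sub_or_eq ht.first_mem_Ioc hr.last_mem_Ico ?_
    exact add_sub_one_eq_zero_or_one_le_norm L hmin.1 hA hB' hL hAt (by simpa [L'] using hB'r)
  · refine pi_le_add_two_pi_sub_or_eq hr.first_mem_Ioc ht.last_mem_Ico ?_
    exact add_sub_one_eq_zero_or_one_le_norm L' hmin.1 hA' hB hL' hA'r (by simpa [L'] using hBt)
end
end

section
/- Let P ∈ ℝ² and let u, v ∈ ℝ² be linearly independent vectors. Then the set C = {P + (a·u + b·v)/2 : a, b ∈ ℤ, not both a and b odd}, consisting of the vertices and edge midpoints of the lattice parallelogram tiling generated by u and v, is a balanced configuration: for every point x ∈ C and every d > 0, the set of points of C at distance d from x is finite and the vectors from x to these points sum to zero. -/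
open EuclideanGeometry RealInnerProductSpace

noncomputable section

/-! Around any point `Q` of the configuration, the point reflection `x ↦ 2Q - x` maps the
configuration to itself (it preserves the parities of both coordinates) and fixes every sphere
centred at `Q`, so on each such sphere the vectors `x - Q` cancel in pairs. Finiteness holds
because twice the difference of two points lies in the lattice `ℤu + ℤv`, which is discrete
because `u` and `v` are independent. -/

theorem finsum_mem_sub_eq_zero_of_pointReflection_mem {E : Type*} [AddCommGroup E]
    [IsAddTorsionFree E] {S : Set E} {P : E} (hS : Set.MapsTo (Equiv.pointReflection P) S S) :
    ∑ᶠ x ∈ S, (x - P) = 0 := by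
  have hinv : Set.InvOn (Equiv.pointReflection P) (Equiv.pointReflection P) S S :=
    ⟨fun x _ ↦ Equiv.pointReflection_involutive P x,
      fun x _ ↦ Equiv.pointReflection_involutive P x⟩
  have hsum : ∑ᶠ x ∈ S, (x - P) = ∑ᶠ x ∈ S, -(x - P) :=
    finsum_mem_eq_of_bijOn _ (hinv.bijOn hS hS) fun x _ ↦ by
      rw [Equiv.pointReflection_apply, vsub_eq_sub, vadd_eq_add]; abel
  simp_rw [finsum_neg_distrib] at hsum
  exact self_eq_neg.mp hsum

theorem isBalanced_of_pointReflection_mem {C : Set E2}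
    (hfin : ∀ P ∈ C, ∀ d : ℝ, 0 < d → {x ∈ C | dist x P = d}.Finite)
    (hrefl : ∀ P ∈ C, Set.MapsTo (Equiv.pointReflection P) C C) : IsBalanced C := by
  have : IsAddTorsionFree E2 := .of_isTorsionFree ℝ E2
  refine fun P hP d hd ↦ ⟨hfin P hP d hd, finsum_mem_sub_eq_zero_of_pointReflection_mem ?_⟩
  exact fun x ⟨hxC, hxd⟩ ↦ ⟨hrefl P hP hxC, by rwa [dist_pointReflection_left, dist_comm]⟩

theorem Submodule.finite_inter_span_int_of_linearIndependent {E ι : Type*}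
    [NormedAddCommGroup E] [NormedSpace ℝ E] [FiniteDimensional ℝ E] [Fintype ι]
    {w : ι → E} (hw : LinearIndependent ℝ w) (hcard : Fintype.card ι = Module.finrank ℝ E)
    {s : Set E} (hs : Bornology.IsBounded s) : (s ∩ span ℤ (Set.range w)).Finite := by
  have : ProperSpace E := FiniteDimensional.proper_real E
  have hspan := (hw.span_eq_top_of_card_eq_finrank' hcard).ge
  simpa only [Module.Basis.coe_mk] using ZSpan.setFinite_inter (Module.Basis.mk hw hspan) hs

section LatticeWithMidpoints

variable {E : Type*} [AddCommGroup E] [Module ℝ E] {P u v x y : E}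

def latticeWithMidpoints (P u v : E) : Set E :=
  {x | ∃ a b : ℤ, ¬(Odd a ∧ Odd b) ∧ x = P + ((a : ℝ) / 2) • u + ((b : ℝ) / 2) • v}

theorem pointReflection_mapsTo_latticeWithMidpoints (hy : y ∈ latticeWithMidpoints P u v) :
    Set.MapsTo (Equiv.pointReflection y) (latticeWithMidpoints P u v)
      (latticeWithMidpoints P u v) := by
  obtain ⟨a₀, b₀, -, rfl⟩ := hy
  rintro _ ⟨a, b, hab, rfl⟩
  refine ⟨2 * a₀ - a, 2 * b₀ - b, ?_, ?_⟩
  · simp only [Int.odd_iff] at hab ⊢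
    omega
  · rw [Equiv.pointReflection_apply, vsub_eq_sub, vadd_eq_add]
    push_cast
    module

theorem two_smul_sub_mem_span_of_mem_latticeWithMidpoints (hx : x ∈ latticeWithMidpoints P u v)
    (hy : y ∈ latticeWithMidpoints P u v) :
    (2 : ℝ) • (x - y) ∈ Submodule.span ℤ (Set.range ![u, v]) := by
  obtain ⟨a, b, -, rfl⟩ := hx
  obtain ⟨a', b', -, rfl⟩ := hy
  rw [Matrix.range_cons_cons_empty, Submodule.mem_span_pair]
  refine ⟨a - a', b - b', ?_⟩
  simp only [← Int.cast_smul_eq_zsmul ℝ]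
  push_cast
  module

end LatticeWithMidpoints

theorem finite_latticeWithMidpoints_inter_sphere {E : Type*} [NormedAddCommGroup E]
    [NormedSpace ℝ E] [FiniteDimensional ℝ E] (hE : Module.finrank ℝ E = 2) {P u v Q : E}
    (huv : LinearIndependent ℝ ![u, v]) (hQ : Q ∈ latticeWithMidpoints P u v) (d : ℝ) :
    {x ∈ latticeWithMidpoints P u v | dist x Q = d}.Finite := by
  refine Set.Finite.of_finite_image (f := fun x ↦ (2 : ℝ) • (x - Q)) ?_ ?_
  · refine (Submodule.finite_inter_span_int_of_linearIndependent huv (by simp [hE])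
      (Metric.isBounded_sphere (x := 0) (r := 2 * d))).subset ?_
    rintro _ ⟨x, ⟨hx, hxd⟩, rfl⟩
    refine ⟨?_, two_smul_sub_mem_span_of_mem_latticeWithMidpoints hx hQ⟩
    rw [mem_sphere_zero_iff_norm, norm_smul, ← dist_eq_norm, hxd]
    norm_num
  · intro x _ y _ hxy
    simpa using hxy

/-- The vertices together with the edge midpoints of a lattice parallelogram tiling form a
balanced configuration. -/
theorem lattice_with_midpoints_is_balanced (P u v : E2)
    (huv : LinearIndependent ℝ ![u, v]) :
    IsBalanced {x | ∃ a b : ℤ, ¬(Odd a ∧ Odd b) ∧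
      x = P + ((a : ℝ) / 2) • u + ((b : ℝ) / 2) • v} :=
  isBalanced_of_pointReflection_mem
    (fun _ hQ d _ ↦ finite_latticeWithMidpoints_inter_sphere finrank_euclideanSpace_fin huv hQ d)
    (fun _ hQ ↦ pointReflection_mapsTo_latticeWithMidpoints hQ)
end
end

section
/- Let P ∈ ℝ² and let u, v ∈ ℝ² satisfy ‖u‖ = ‖v‖ = √3 and ⟨u,v⟩ = 3/2. Then the set C = {P + a·u + b·v + ε·(u+v)/3 : a, b ∈ ℤ, ε ∈ {0,1}}, which is the vertex set of a regular hexagon tiling with side length 1, is a balanced configuration: for every point x ∈ C and every d > 0, the set of points of C at distance d from x is finite and the vectors from x to these points sum to zero. -/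
/-!
Around a vertex `Q`, the rotation by `2π/3` about `Q` (sending `u ↦ v - u`, `v ↦ -u`) maps the
vertex set into itself and preserves distances to `Q`, so it permutes the finitely many vertices
at distance `d` from `Q`. The sum `S` of the vectors `x - Q` over them is therefore fixed by the
rotation, which fixes no nonzero vector; hence `S = 0`. Finiteness holds because differences of
vertices lie in the discrete lattice spanned by `u / 3` and `v / 3`.
-/

open EuclideanGeometry RealInnerProductSpace

noncomputable section

open Module Submodule

section Balanced

variable {E : Type*} [NormedAddCommGroup E] [NormedSpace ℝ E]

theorem finsum_mem_sub_eq_zero_of_linearIsometry {C : Set E} {P : E} {d : ℝ}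
    (L : E →ₗᵢ[ℝ] E) (hL : ∀ w, L w = w → w = 0) (hC : ∀ x ∈ C, P + L (x - P) ∈ C)
    (hfin : {x ∈ C | dist x P = d}.Finite) :
    ∑ᶠ x ∈ {x ∈ C | dist x P = d}, (x - P) = 0 := by
  set S := {x ∈ C | dist x P = d}
  have hmaps : Set.MapsTo (fun x => P + L (x - P)) S S := fun x ⟨hx, hxd⟩ =>
    ⟨hC x hx, by rwa [dist_eq_norm, add_sub_cancel_left, L.norm_map, ← dist_eq_norm]⟩
  have hinj : Set.InjOn (fun x => P + L (x - P)) S := fun x _ y _ hxy => by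
    simpa using L.injective (add_left_cancel hxy)
  apply hL
  calc L (∑ᶠ x ∈ S, (x - P)) = ∑ᶠ x ∈ S, L (x - P) :=
        L.toLinearMap.toAddMonoidHom.map_finsum_mem _ hfin
    _ = ∑ᶠ x ∈ S, (x - P) :=
        finsum_mem_eq_of_bijOn _ ((hfin.injOn_iff_bijOn_of_mapsTo hmaps).1 hinj) (by simp)

theorem finite_inter_of_sub_mem_span [FiniteDimensional ℝ E] {ι : Type*} [Finite ι]
    (b : Basis ι ℝ E) {C s : Set E} (hC : ∀ x ∈ C, ∀ y ∈ C, x - y ∈ span ℤ (Set.range b))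
    {P : E} (hP : P ∈ C) (hs : Bornology.IsBounded s) : (C ∩ s).Finite := by
  refine ((ZSpan.setFinite_inter b (hs.vadd (-P))).image (P + ·)).subset ?_
  rintro x ⟨hx, hxs⟩
  exact ⟨x - P, ⟨⟨x, hxs, by simp [sub_eq_neg_add]⟩, hC x hx P hP⟩, by simp⟩

end Balanced

theorem isBalanced_of_linearIsometry {C : Set E2} {ι : Type*} [Finite ι] (b : Basis ι ℝ E2)
    (hb : ∀ x ∈ C, ∀ y ∈ C, x - y ∈ span ℤ (Set.range b))
    (L : E2 →ₗᵢ[ℝ] E2) (hL : ∀ w, L w = w → w = 0) (hC : ∀ P ∈ C, ∀ x ∈ C, P + L (x - P) ∈ C) :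
    IsBalanced C := by
  intro P hP d _
  have hfin : {x ∈ C | dist x P = d}.Finite :=
    (finite_inter_of_sub_mem_span b hb hP (Metric.isBounded_sphere (x := P) (r := d))).subset
      fun x hx => hx
  exact ⟨hfin, finsum_mem_sub_eq_zero_of_linearIsometry L hL (hC P hP) hfin⟩

section SixtyDegrees

variable {E : Type*} [NormedAddCommGroup E] [InnerProductSpace ℝ E] {u v : E}

theorem norm_smul_add_smul_sq_of_inner_eq_half (hv : ‖v‖ = ‖u‖) (huv : ⟪u, v⟫ = ‖u‖ ^ 2 / 2)
    (s t : ℝ) : ‖s • u + t • v‖ ^ 2 = ‖u‖ ^ 2 * (s ^ 2 + s * t + t ^ 2) := by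
  have hvv : ⟪v, v⟫ = ‖u‖ ^ 2 := by rw [real_inner_self_eq_norm_sq, hv]
  rw [← real_inner_self_eq_norm_sq]
  simp only [inner_add_left, inner_add_right, real_inner_smul_left, real_inner_smul_right,
    real_inner_self_eq_norm_sq u, hvv, huv, real_inner_comm u v]
  ring

theorem linearIndependent_pair_of_inner_eq_half (hu0 : u ≠ 0) (hv : ‖v‖ = ‖u‖)
    (huv : ⟪u, v⟫ = ‖u‖ ^ 2 / 2) : LinearIndependent ℝ ![u, v] := by
  refine LinearIndependent.pair_iff.2 fun s t hst => ?_
  have hpos : 0 < ‖u‖ ^ 2 := by positivity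
  have hform := norm_smul_add_smul_sq_of_inner_eq_half hv huv s t
  rw [hst, norm_zero, zero_pow two_ne_zero, eq_comm, mul_eq_zero] at hform
  have hquad := hform.resolve_left hpos.ne'
  constructor <;> nlinarith [sq_nonneg s, sq_nonneg t, sq_nonneg (s + t)]

theorem exists_basis_of_inner_eq_half (hE : finrank ℝ E = 2) (hu0 : u ≠ 0) (hv : ‖v‖ = ‖u‖)
    (huv : ⟪u, v⟫ = ‖u‖ ^ 2 / 2) : ∃ b : Basis (Fin 2) ℝ E, ⇑b = ![u, v] :=
  have hli := linearIndependent_pair_of_inner_eq_half hu0 hv huv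
  ⟨basisOfLinearIndependentOfCardEqFinrank hli (by simp [hE]),
    coe_basisOfLinearIndependentOfCardEqFinrank hli _⟩

theorem exists_linearIsometry_rotation (b : Basis (Fin 2) ℝ E) (hb : ⇑b = ![u, v])
    (hv : ‖v‖ = ‖u‖) (huv : ⟪u, v⟫ = ‖u‖ ^ 2 / 2) :
    ∃ L : E →ₗᵢ[ℝ] E, L u = v - u ∧ L v = -u ∧ ∀ w, L w = w → w = 0 := by
  have hspan : ∀ w, ∃ s t : ℝ, w = s • u + t • v := fun w =>
    ⟨b.repr w 0, b.repr w 1, by simpa [hb, Fin.sum_univ_two] using (b.sum_repr w).symm⟩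
  let f := b.constr ℝ ![v - u, -u]
  have hfu : f u = v - u := by
    simpa only [hb, Matrix.cons_val_zero, Matrix.cons_val_one] using b.constr_basis ℝ ![v - u, -u] 0
  have hfv : f v = -u := by
    simpa only [hb, Matrix.cons_val_zero, Matrix.cons_val_one] using b.constr_basis ℝ ![v - u, -u] 1
  have hf : ∀ s t : ℝ, f (s • u + t • v) = (-s - t) • u + s • v := fun s t => by
    rw [map_add, map_smul, map_smul, hfu, hfv]; module
  refine ⟨⟨f, fun w => ?_⟩, hfu, hfv, fun w hw => ?_⟩ <;> obtain ⟨s, t, rfl⟩ := hspan w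
  · rw [hf, ← sq_eq_sq₀ (norm_nonneg _) (norm_nonneg _),
      norm_smul_add_smul_sq_of_inner_eq_half hv huv,
      norm_smul_add_smul_sq_of_inner_eq_half hv huv]
    ring
  · have h0 : (-2 * s - t) • u + (s - t) • v = 0 := by
      rw [← sub_eq_zero.2 (show f (s • u + t • v) = s • u + t • v from hw), hf]; module
    obtain ⟨hs, ht⟩ := LinearIndependent.pair_iff.1 (hb ▸ b.linearIndependent) _ _ h0
    obtain rfl : s = 0 := by linarith
    obtain rfl : t = 0 := by linarith
    simp

end SixtyDegrees

section Hexagon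

variable {E : Type*} [AddCommGroup E] [Module ℝ E] {P u v x y : E}

def hexagonVertices (P u v : E) : Set E :=
  {x | ∃ a b : ℤ, ∃ ε : ℝ, (ε = 0 ∨ ε = 1) ∧ x = P + (a : ℝ) • u + (b : ℝ) • v + (ε / 3) • (u + v)}

theorem mem_hexagonVertices_iff : x ∈ hexagonVertices P u v ↔
    ∃ a b e : ℤ, (e = 0 ∨ e = 1) ∧ x = P + (a : ℝ) • u + (b : ℝ) • v + ((e : ℝ) / 3) • (u + v) := by
  constructor
  · rintro ⟨a, b, ε, rfl | rfl, rfl⟩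
    exacts [⟨a, b, 0, by simp⟩, ⟨a, b, 1, by simp⟩]
  · rintro ⟨a, b, e, he, rfl⟩
    exact ⟨a, b, e, by rcases he with rfl | rfl <;> simp, rfl⟩

theorem sub_mem_span_of_mem_hexagonVertices (hx : x ∈ hexagonVertices P u v)
    (hy : y ∈ hexagonVertices P u v) :
    x - y ∈ span ℤ (Set.range fun i => (3 : ℝ)⁻¹ • ![u, v] i) := by
  obtain ⟨a, b, e, -, rfl⟩ := mem_hexagonVertices_iff.1 hx
  obtain ⟨a', b', e', -, rfl⟩ := mem_hexagonVertices_iff.1 hy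
  have hu : (3 : ℝ)⁻¹ • u ∈ span ℤ (Set.range fun i => (3 : ℝ)⁻¹ • ![u, v] i) :=
    subset_span ⟨0, rfl⟩
  have hv : (3 : ℝ)⁻¹ • v ∈ span ℤ (Set.range fun i => (3 : ℝ)⁻¹ • ![u, v] i) :=
    subset_span ⟨1, rfl⟩
  convert add_mem (zsmul_mem hu (3 * (a - a') + (e - e'))) (zsmul_mem hv (3 * (b - b') + (e - e')))
    using 1
  simp only [← Int.cast_smul_eq_zsmul ℝ]
  push_cast
  module

theorem add_map_sub_mem_hexagonVertices {F : Type*} [FunLike F E E] [LinearMapClass F ℝ E E]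
    {L : F} (hLu : L u = v - u) (hLv : L v = -u) (hx : x ∈ hexagonVertices P u v)
    (hy : y ∈ hexagonVertices P u v) : y + L (x - y) ∈ hexagonVertices P u v := by
  obtain ⟨a, b, e, he, rfl⟩ := mem_hexagonVertices_iff.1 hx
  obtain ⟨a', b', e', -, rfl⟩ := mem_hexagonVertices_iff.1 hy
  -- the rotation sends `(u + v) / 3` to `(u + v) / 3 - u`, so `e` is preserved
  refine mem_hexagonVertices_iff.2 ⟨2 * a' + b' - a - b + e' - e, b' + a - a', e, he, ?_⟩
  have hxy : P + (a : ℝ) • u + (b : ℝ) • v + ((e : ℝ) / 3) • (u + v) -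
      (P + (a' : ℝ) • u + (b' : ℝ) • v + ((e' : ℝ) / 3) • (u + v)) =
      ((a : ℝ) - a' + (e - e') / 3) • u + ((b : ℝ) - b' + (e - e') / 3) • v := by module
  rw [hxy, map_add, map_smul, map_smul, hLu, hLv]
  push_cast
  module

end Hexagon

/-- The vertex set of a regular hexagon tiling with side 1 is a balanced configuration. -/
theorem hexagon_vertices_are_balanced (P u v : E2)
    (hu : ‖u‖ = Real.sqrt 3) (hv : ‖v‖ = Real.sqrt 3) (huv : ⟪u, v⟫ = 3 / 2) :
    IsBalanced {x | ∃ a b : ℤ, ∃ ε : ℝ, (ε = 0 ∨ ε = 1) ∧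
      x = P + (a : ℝ) • u + (b : ℝ) • v + (ε / 3) • (u + v)} := by
  change IsBalanced (hexagonVertices P u v)
  have hu0 : u ≠ 0 := by rintro rfl; norm_num at huv
  have hvu : ‖v‖ = ‖u‖ := hv.trans hu.symm
  have huv' : ⟪u, v⟫ = ‖u‖ ^ 2 / 2 := by rw [huv, hu, Real.sq_sqrt zero_le_three]
  obtain ⟨b, hb⟩ := exists_basis_of_inner_eq_half finrank_euclideanSpace_fin hu0 hvu huv'
  obtain ⟨L, hLu, hLv, hL⟩ := exists_linearIsometry_rotation b hb hvu huv'
  let b₃ := b.isUnitSMul (w := fun _ => (3 : ℝ)⁻¹) fun _ => by simp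
  have hb₃ : ⇑b₃ = fun i => (3 : ℝ)⁻¹ • ![u, v] i := by
    ext i; simp [b₃, Basis.isUnitSMul_apply, hb]
  exact isBalanced_of_linearIsometry b₃
    (fun x hx y hy => hb₃ ▸ sub_mem_span_of_mem_hexagonVertices hx hy) L hL
    fun Q hQ x hx => add_map_sub_mem_hexagonVertices hLu hLv hx hQ
end
end
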